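/- arXiv:2512.09308 — 4 statements merged into one kernel-verified Lean document; each statement's English description precedes it below -/
import Mathlib

section
/- For every κ ∈ (0,1) and every z > 0, one has |θ_κ(z)| ≤ 1. -/
open Real Filter Topology

/-- The modified Bessel function of the second kind
`K_ν(z) = (1/2) ∫_0^∞ s^{ν−1} exp(−(z/2)(s + 1/s)) ds`. -/
noncomputable def besselK (ν z : ℝ) : ℝ :=
  (1 / 2) * ∫ s in Set.Ioi (0 : ℝ), s ^ (ν - 1) * Real.exp (-(z / 2) * (s + 1 / s))

/-- `θ_κ(z) = 1 − (2^{(3−κ)/2} Γ(κ) cos(πκ/2)/(√π Γ(κ/2))) z^{(1−κ)/2} K_{(κ−1)/2}(z)`. -/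
noncomputable def theta (κ z : ℝ) : ℝ :=
  1 - (2 : ℝ) ^ ((3 - κ) / 2) * Real.Gamma κ * Real.cos (Real.pi * κ / 2) /
      (Real.sqrt Real.pi * Real.Gamma (κ / 2)) * z ^ ((1 - κ) / 2) * besselK ((κ - 1) / 2) z

open MeasureTheory Set in
/-- Substitution `s ↦ s⁻¹` turns the bound integral into a Gamma integral. -/
lemma integral_bound_eq (c μ : ℝ) (hc : 0 < c) (hμ : 0 < μ) :
    ∫ s in Ioi (0 : ℝ), s ^ (-μ - 1) * Real.exp (-(c) * (1 / s))
      = (1 / c) ^ μ * Real.Gamma μ := by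
  rw [← Real.integral_rpow_mul_exp_neg_mul_Ioi hμ hc,
    ← integral_comp_rpow_Ioi (fun u => u ^ (μ - 1) * Real.exp (-(c * u)))
      (p := -1) (by norm_num)]
  refine setIntegral_congr_fun measurableSet_Ioi (fun x hx => ?_)
  have hx0 : (0 : ℝ) < x := hx
  have h1 : x ^ (-1 : ℝ) = x⁻¹ := Real.rpow_neg_one x
  rw [smul_eq_mul, h1, Real.inv_rpow hx0.le, ← Real.rpow_neg hx0.le, abs_neg, abs_one, one_mul,
    ← mul_assoc, ← Real.rpow_add hx0]
  norm_num
  congr 1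
  ring

open MeasureTheory Set in
lemma integrableOn_bound (c μ : ℝ) (hc : 0 < c) (hμ0 : 0 < μ) (hμ1 : μ < 1) :
    IntegrableOn (fun s => s ^ (-μ - 1) * Real.exp (-(c) * (1 / s))) (Ioi (0 : ℝ)) := by
  have hmeas : AEStronglyMeasurable
      (fun s : ℝ => s ^ (-μ - 1) * Real.exp (-(c) * (1 / s))) (volume.restrict (Ioi 0)) := by
    apply Measurable.aestronglyMeasurable
    fun_prop
  have h1 : IntegrableOn (fun s => s ^ (-μ - 1) * Real.exp (-(c) * (1 / s))) (Ioc (0 : ℝ) 1) := by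
    have hb : IntegrableOn (fun s : ℝ => c⁻¹ * s ^ (-μ)) (Ioc (0 : ℝ) 1) := by
      refine Integrable.const_mul ?_ _
      exact (intervalIntegral.intervalIntegrable_rpow' (a := 0) (b := 1) (by linarith)).1
    refine Integrable.mono' hb (hmeas.mono_set Ioc_subset_Ioi_self) ?_
    refine (ae_restrict_iff' measurableSet_Ioc).mpr (ae_of_all _ fun s hs => ?_)
    have hs0 : (0 : ℝ) < s := hs.1
    have hx : 0 < c * (1 / s) := by positivity
    have hexp : Real.exp (-(c) * (1 / s)) ≤ s / c := by
      have h1 : c * (1 / s) ≤ Real.exp (c * (1 / s)) := by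
        nlinarith [Real.add_one_le_exp (c * (1 / s))]
      have h2 : Real.exp (-(c) * (1 / s)) = (Real.exp (c * (1 / s)))⁻¹ := by
        rw [← Real.exp_neg]; ring_nf
      rw [h2]
      have h3 : (Real.exp (c * (1 / s)))⁻¹ ≤ (c * (1 / s))⁻¹ :=
        inv_anti₀ hx h1
      calc (Real.exp (c * (1 / s)))⁻¹ ≤ (c * (1 / s))⁻¹ := h3
        _ = s / c := by field_simp
    have hpow : (0 : ℝ) ≤ s ^ (-μ - 1) := Real.rpow_nonneg hs0.le _
    have key : s ^ (-μ - 1) * Real.exp (-(c) * (1 / s)) ≤ s ^ (-μ - 1) * (s / c) :=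
      mul_le_mul_of_nonneg_left hexp hpow
    have hss : s ^ (-μ - 1) * (s / c) = c⁻¹ * s ^ (-μ) := by
      have : s ^ (-μ - 1) * s = s ^ (-μ) := by
        nth_rewrite 2 [← Real.rpow_one s]
        rw [← Real.rpow_add hs0]; ring_nf
      rw [show s ^ (-μ - 1) * (s / c) = s ^ (-μ - 1) * s / c by ring, this, div_eq_inv_mul]
    rw [norm_mul, Real.norm_eq_abs, Real.norm_eq_abs, abs_of_nonneg hpow, Real.abs_exp]
    calc s ^ (-μ - 1) * Real.exp (-(c) * (1 / s)) ≤ s ^ (-μ - 1) * (s / c) := key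
      _ = c⁻¹ * s ^ (-μ) := hss
  have h2 : IntegrableOn (fun s => s ^ (-μ - 1) * Real.exp (-(c) * (1 / s))) (Ioi (1 : ℝ)) := by
    have hb : IntegrableOn (fun s : ℝ => s ^ (-μ - 1)) (Ioi (1 : ℝ)) :=
      integrableOn_Ioi_rpow_of_lt (by linarith) one_pos
    refine Integrable.mono' hb (hmeas.mono_set (Ioi_subset_Ioi zero_le_one)) ?_
    refine (ae_restrict_iff' measurableSet_Ioi).mpr (ae_of_all _ fun s hs => ?_)
    have hs0 : (0 : ℝ) < s := lt_trans one_pos hs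
    have hpow : (0 : ℝ) ≤ s ^ (-μ - 1) := Real.rpow_nonneg hs0.le _
    rw [norm_mul, Real.norm_eq_abs, Real.norm_eq_abs, abs_of_nonneg hpow, Real.abs_exp]
    have : Real.exp (-(c) * (1 / s)) ≤ 1 := by
      rw [Real.exp_le_one_iff]
      have : 0 < 1 / s := by positivity
      nlinarith
    nlinarith [Real.rpow_nonneg hs0.le (-μ - 1), Real.exp_pos (-(c) * (1 / s))]
  have := h1.union h2
  rwa [Ioc_union_Ioi_eq_Ioi zero_le_one] at this

lemma key_identity (κ : ℝ) (hκ0 : 0 < κ) (hκ1 : κ < 1) :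
    (2 : ℝ) ^ ((3 - κ) / 2) * Real.Gamma κ * Real.cos (Real.pi * κ / 2) /
      (Real.sqrt Real.pi * Real.Gamma (κ / 2)) *
      (1 / 2 * ((2 : ℝ) ^ ((1 - κ) / 2) * Real.Gamma ((1 - κ) / 2))) = 1 := by
  have hπ := Real.pi_pos
  have hsπ0 : 0 < Real.sqrt Real.pi := Real.sqrt_pos.mpr hπ
  have hsπ : Real.sqrt Real.pi * Real.sqrt Real.pi = Real.pi := Real.mul_self_sqrt hπ.le
  have hcos : 0 < Real.cos (Real.pi * κ / 2) := by
    apply Real.cos_pos_of_mem_Ioo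
    constructor <;> nlinarith
  have hA : 0 < Real.Gamma (κ / 2) := Real.Gamma_pos_of_pos (by linarith)
  have hdup := Real.Gamma_mul_Gamma_add_half (κ / 2)
  rw [show 2 * (κ / 2) = κ by ring, show κ / 2 + 1 / 2 = (1 + κ) / 2 by ring] at hdup
  have hrefl := Real.Gamma_mul_Gamma_one_sub ((1 + κ) / 2)
  rw [show (1 : ℝ) - (1 + κ) / 2 = (1 - κ) / 2 by ring,
    show Real.pi * ((1 + κ) / 2) = Real.pi * κ / 2 + Real.pi / 2 by ring,
    Real.sin_add_pi_div_two] at hrefl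
  rw [eq_div_iff hcos.ne'] at hrefl
  have h2 : (2 : ℝ) ^ ((3 - κ) / 2) * (2 : ℝ) ^ ((1 - κ) / 2) = 2 * (2 : ℝ) ^ (1 - κ) := by
    rw [← Real.rpow_add two_pos, show (3 - κ) / 2 + (1 - κ) / 2 = 1 + (1 - κ) by ring,
      Real.rpow_add two_pos, Real.rpow_one]
  set t3 := (2 : ℝ) ^ ((3 - κ) / 2)
  set t1 := (2 : ℝ) ^ ((1 - κ) / 2)
  set t2 := (2 : ℝ) ^ (1 - κ)
  set A := Real.Gamma (κ / 2)
  set B := Real.Gamma ((1 + κ) / 2)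
  set D := Real.Gamma ((1 - κ) / 2)
  set c := Real.cos (Real.pi * κ / 2)
  set sπ := Real.sqrt Real.pi
  have step1 : t2 * Real.Gamma κ * c * D * sπ = sπ * A * sπ := by
    linear_combination (c * D) * hdup.symm + A * hrefl + A * hsπ.symm
  have step2 : t2 * Real.Gamma κ * c * D = sπ * A := mul_right_cancel₀ hsπ0.ne' step1
  have main : t3 * Real.Gamma κ * c * (t1 * D) = 2 * (sπ * A) := by
    linear_combination (Real.Gamma κ * c * D) * h2 + 2 * step2
  field_simp
  linear_combination main

open MeasureTheory Set in
/-- For every `κ ∈ (0,1)` and every `z > 0`, one has `|θ_κ(z)| ≤ 1`. -/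
theorem abs_theta_le_one (κ : ℝ) (hκ : κ ∈ Set.Ioo (0 : ℝ) 1) (z : ℝ) (hz : 0 < z) :
    |theta κ z| ≤ 1 := by
  obtain ⟨hκ0, hκ1⟩ := hκ
  have hπ := Real.pi_pos
  set μ : ℝ := (1 - κ) / 2 with hμdef
  have hμ0 : 0 < μ := by simp only [hμdef]; linarith
  have hμ1 : μ < 1 := by simp only [hμdef]; linarith
  have hc : (0 : ℝ) < z / 2 := by linarith
  have hcos : 0 < Real.cos (Real.pi * κ / 2) := by
    apply Real.cos_pos_of_mem_Ioo
    constructor <;> nlinarith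
  have hΓκ : 0 < Real.Gamma κ := Real.Gamma_pos_of_pos hκ0
  have hΓκ2 : 0 < Real.Gamma (κ / 2) := Real.Gamma_pos_of_pos (by linarith)
  have hΓμ : 0 < Real.Gamma μ := Real.Gamma_pos_of_pos hμ0
  have hsπ0 : 0 < Real.sqrt Real.pi := Real.sqrt_pos.mpr hπ
  set C : ℝ := (2 : ℝ) ^ ((3 - κ) / 2) * Real.Gamma κ * Real.cos (Real.pi * κ / 2) /
      (Real.sqrt Real.pi * Real.Gamma (κ / 2)) with hCdef
  have hC : 0 < C := by
    apply div_pos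
    · have : (0 : ℝ) < (2 : ℝ) ^ ((3 - κ) / 2) := Real.rpow_pos_of_pos two_pos _
      positivity
    · positivity
  -- nonnegativity of the Bessel integral
  have hK0 : 0 ≤ besselK ((κ - 1) / 2) z := by
    unfold besselK
    have : 0 ≤ ∫ s in Ioi (0 : ℝ),
        s ^ ((κ - 1) / 2 - 1) * Real.exp (-(z / 2) * (s + 1 / s)) := by
      apply setIntegral_nonneg measurableSet_Ioi
      intro s hs
      have hs0 : (0 : ℝ) < s := hs
      exact mul_nonneg (Real.rpow_nonneg hs0.le _) (Real.exp_nonneg _)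
    linarith
  -- upper bound on the Bessel integral
  have hKle : besselK ((κ - 1) / 2) z ≤ 1 / 2 * ((1 / (z / 2)) ^ μ * Real.Gamma μ) := by
    unfold besselK
    have hexp : (κ - 1) / 2 - 1 = -μ - 1 := by simp only [hμdef]; ring
    have hint : (∫ s in Ioi (0 : ℝ),
        s ^ ((κ - 1) / 2 - 1) * Real.exp (-(z / 2) * (s + 1 / s)))
        ≤ ∫ s in Ioi (0 : ℝ), s ^ (-μ - 1) * Real.exp (-(z / 2) * (1 / s)) := by
      apply integral_mono_of_nonneg
      · refine (ae_restrict_iff' measurableSet_Ioi).mpr (ae_of_all _ fun s hs => ?_)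
        have hs0 : (0 : ℝ) < s := hs
        exact mul_nonneg (Real.rpow_nonneg hs0.le _) (Real.exp_nonneg _)
      · exact integrableOn_bound (z / 2) μ hc hμ0 hμ1
      · refine (ae_restrict_iff' measurableSet_Ioi).mpr (ae_of_all _ fun s hs => ?_)
        have hs0 : (0 : ℝ) < s := hs
        rw [hexp]
        apply mul_le_mul_of_nonneg_left _ (Real.rpow_nonneg hs0.le _)
        apply Real.exp_le_exp.mpr
        have h1s : 0 < 1 / s := by positivity
        nlinarith
    rw [integral_bound_eq (z / 2) μ hc hμ0] at hint
    linarith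
  set x : ℝ := C * z ^ ((1 - κ) / 2) * besselK ((κ - 1) / 2) z with hxdef
  have hzμ : (0 : ℝ) < z ^ μ := Real.rpow_pos_of_pos hz μ
  have hx0 : 0 ≤ x := by
    apply mul_nonneg _ hK0
    exact mul_nonneg hC.le (Real.rpow_nonneg hz.le _)
  have hx1 : x ≤ 1 := by
    have hb : x ≤ C * z ^ μ * (1 / 2 * ((1 / (z / 2)) ^ μ * Real.Gamma μ)) := by
      rw [hxdef, ← hμdef]
      exact mul_le_mul_of_nonneg_left hKle (mul_nonneg hC.le hzμ.le)
    have heq : C * z ^ μ * (1 / 2 * ((1 / (z / 2)) ^ μ * Real.Gamma μ))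
        = C * (1 / 2 * ((2 : ℝ) ^ μ * Real.Gamma μ)) := by
      have h1 : (1 / (z / 2)) ^ μ = (2 : ℝ) ^ μ / z ^ μ := by
        rw [one_div_div, Real.div_rpow two_pos.le hz.le]
      rw [h1]
      field_simp
    have hone : C * (1 / 2 * ((2 : ℝ) ^ μ * Real.Gamma μ)) = 1 := by
      rw [hCdef, hμdef]
      exact key_identity κ hκ0 hκ1
    rw [heq, hone] at hb
    exact hb
  have : theta κ z = 1 - x := by rw [theta, hxdef, hCdef]
  rw [this, abs_le]
  constructor <;> linarith
end

section
/- For every κ ∈ (0,1), as z → 0⁺ one has the expansion θ_κ(z) = (Γ((κ+1)/2)/(2^{1−κ} Γ((3−κ)/2))) z^{1−κ} − z²/(2(κ+1)) + o(z²); in particular lim_{z→0⁺} θ_κ(z) = 0. -/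
open Real Filter Topology Asymptotics MeasureTheory Set

noncomputable def Jint (μ a : ℝ) : ℝ :=
  ∫ t in Ioi (0:ℝ), t ^ (μ - 1) * Real.exp (-t - a / t)



lemma exp_neg_le_one {x : ℝ} (hx : 0 ≤ x) : Real.exp (-x) ≤ 1 :=
  Real.exp_le_one_iff.mpr (by linarith)

lemma abs_exp_neg_sub_one_le_one {x : ℝ} (hx : 0 ≤ x) : |Real.exp (-x) - 1| ≤ 1 := by
  rw [abs_sub_comm, abs_of_nonneg (by linarith [exp_neg_le_one hx])]
  linarith [Real.exp_pos (-x)]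

lemma abs_exp_neg_sub_one_le {x : ℝ} (hx : 0 ≤ x) : |Real.exp (-x) - 1| ≤ x := by
  rw [abs_sub_comm, abs_of_nonneg (by linarith [exp_neg_le_one hx])]
  linarith [Real.add_one_le_exp (-x)]

lemma exp_neg_taylor_nonneg (x : ℝ) : 0 ≤ Real.exp (-x) - 1 + x := by
  linarith [Real.add_one_le_exp (-x)]

lemma exp_neg_taylor_le_self {x : ℝ} (hx : 0 ≤ x) : Real.exp (-x) - 1 + x ≤ x := by
  linarith [exp_neg_le_one hx]

lemma exp_neg_taylor_le_sq {x : ℝ} (hx : 0 ≤ x) : Real.exp (-x) - 1 + x ≤ x ^ 2 / 2 := by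
  have h : ∀ y : ℝ, HasDerivAt (fun t => t ^ 2 / 2 + 1 - t - Real.exp (-t))
      (y - 1 + Real.exp (-y)) y := by
    intro y
    have := ((hasDerivAt_id y).neg.exp)
    have h2 := ((((hasDerivAt_pow 2 y).div_const 2).add_const 1).sub (hasDerivAt_id y)).sub
        (((hasDerivAt_id y).neg).exp)
    exact h2.congr_deriv (by norm_num [id])
  have mono : MonotoneOn (fun t : ℝ => t ^ 2 / 2 + 1 - t - Real.exp (-t)) (Set.Ici 0) := by
    refine monotoneOn_of_deriv_nonneg (convex_Ici 0) (Continuous.continuousOn (by continuity))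
      (fun y _ => (h y).differentiableAt.differentiableWithinAt) ?_
    intro y hy
    rw [interior_Ici] at hy
    rw [(h y).deriv]
    have := Real.add_one_le_exp (-y)
    linarith
  have := mono (Set.self_mem_Ici) (Set.mem_Ici.mpr hx) hx
  simp at this
  linarith



lemma contOn_rpow (c : ℝ) {S : Set ℝ} (hS : S ⊆ Ioi 0) :
    ContinuousOn (fun t : ℝ => t ^ c) S :=
  fun t ht => ((Real.continuousAt_rpow_const t c (Or.inl (ne_of_gt (hS ht)))).continuousWithinAt)

lemma mono_helper {f g : ℝ → ℝ} {S : Set ℝ} (hS : MeasurableSet S) (hg : IntegrableOn g S)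
    (hmeas : AEStronglyMeasurable f (volume.restrict S))
    (hbound : ∀ x ∈ S, |f x| ≤ g x) : IntegrableOn f S :=
  hg.mono' hmeas (by
    filter_upwards [ae_restrict_mem hS] with x hx
    simpa using hbound x hx)

lemma integrableOn_rpow_exp {c : ℝ} (hc : 0 < c) :
    IntegrableOn (fun t : ℝ => t ^ (c - 1) * Real.exp (-t)) (Ioi 0) := by
  have := Real.GammaIntegral_convergent hc
  exact this.congr_fun (fun x _ => mul_comm _ _) measurableSet_Ioi

lemma integrableOn_rpow_Ioc {c : ℝ} (hc : -1 < c) :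
    IntegrableOn (fun t : ℝ => t ^ c) (Ioc (0:ℝ) 1) := by
  have := intervalIntegral.intervalIntegrable_rpow' (a := 0) (b := 1) hc
  rwa [intervalIntegrable_iff_integrableOn_Ioc_of_le zero_le_one] at this

lemma integrableOn_B {s : ℝ} (h1 : -1 < s) (h2 : s < 0) :
    IntegrableOn (fun v : ℝ => v ^ (s - 1) * (Real.exp (-v) - 1)) (Ioi 0) := by
  rw [← Ioc_union_Ioi_eq_Ioi (zero_le_one (α := ℝ)), integrableOn_union]
  have hcont : ContinuousOn (fun v : ℝ => v ^ (s - 1) * (Real.exp (-v) - 1)) (Ioi 0) :=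
    (contOn_rpow _ le_rfl).mul (by fun_prop)
  constructor
  · refine mono_helper measurableSet_Ioc (integrableOn_rpow_Ioc h1)
      ((hcont.mono Ioc_subset_Ioi_self).aestronglyMeasurable measurableSet_Ioc) ?_
    intro x hx
    rw [abs_mul, abs_of_nonneg (Real.rpow_nonneg hx.1.le _)]
    calc x ^ (s-1) * |Real.exp (-x) - 1| ≤ x ^ (s-1) * x := by
          exact mul_le_mul_of_nonneg_left (abs_exp_neg_sub_one_le hx.1.le)
            (Real.rpow_nonneg hx.1.le _)
      _ = x ^ s := by
          rw [← Real.rpow_add_one (ne_of_gt hx.1) (s-1)]; ring_nf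
  · refine mono_helper measurableSet_Ioi (integrableOn_Ioi_rpow_of_lt (show s - 1 < -1 by linarith) zero_lt_one)
      ((hcont.mono (Ioi_subset_Ioi zero_le_one)).aestronglyMeasurable measurableSet_Ioi) ?_
    intro x hx
    have hx0 : (0:ℝ) < x := lt_trans zero_lt_one hx
    rw [abs_mul, abs_of_nonneg (Real.rpow_nonneg hx0.le _)]
    calc x ^ (s-1) * |Real.exp (-x) - 1| ≤ x ^ (s-1) * 1 :=
          mul_le_mul_of_nonneg_left (abs_exp_neg_sub_one_le_one hx0.le)
            (Real.rpow_nonneg hx0.le _)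
      _ = x ^ (s-1) := mul_one _

lemma Gamma_eq_integral_sub_one {s : ℝ} (h1 : -1 < s) (h2 : s < 0) :
    ∫ v in Ioi (0:ℝ), v ^ (s - 1) * (Real.exp (-v) - 1) = Real.Gamma s := by
  set F : ℝ → ℝ := fun v => v ^ s / s * (Real.exp (-v) - 1) with hF
  have hderiv : ∀ v ∈ Ioi (0:ℝ), HasDerivAt F
      (v ^ (s-1) * (Real.exp (-v) - 1) - v ^ s / s * Real.exp (-v)) v := by
    intro v hv
    have h1' : HasDerivAt (fun v : ℝ => v ^ s / s) (v ^ (s-1)) v := by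
      have := (Real.hasDerivAt_rpow_const (x := v) (p := s) (Or.inl (ne_of_gt hv))).div_const s
      have e : s * v ^ (s-1) / s = v ^ (s-1) := mul_div_cancel_left₀ _ (ne_of_lt h2)
      rw [e] at this
      exact this
    have h2' : HasDerivAt (fun v : ℝ => Real.exp (-v) - 1) (-Real.exp (-v)) v := by
      simpa using (((hasDerivAt_id v).neg).exp).sub_const 1
    exact (h1'.mul h2').congr_deriv (by ring)
  have hcont : ContinuousWithinAt F (Ici 0) 0 := by
    rw [ContinuousWithinAt]
    have hF0 : F 0 = 0 := by simp [hF]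
    rw [hF0]
    have hb : ∀ v ∈ Ioi (0:ℝ), |F v| ≤ v ^ (s+1) / |s| := by
      intro v hv
      rw [hF]
      simp only [abs_mul, abs_div]
      rw [abs_of_nonneg (Real.rpow_nonneg (le_of_lt hv) s)]
      rw [div_mul_eq_mul_div, div_le_div_iff_of_pos_right (abs_pos.mpr (ne_of_lt h2))]
      calc v ^ s * |Real.exp (-v) - 1| ≤ v ^ s * v :=
            mul_le_mul_of_nonneg_left (abs_exp_neg_sub_one_le hv.le)
              (Real.rpow_nonneg hv.le _)
        _ = v ^ (s+1) := (Real.rpow_add_one (ne_of_gt hv) s).symm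
    have hlim : Tendsto (fun v : ℝ => v ^ (s+1) / |s|) (𝓝[Ici 0] 0) (𝓝 0) := by
      have : Tendsto (fun v : ℝ => v ^ (s+1)) (𝓝 0) (𝓝 ((0:ℝ) ^ (s+1))) :=
        (Real.continuousAt_rpow_const 0 (s+1) (Or.inr (show (0:ℝ) ≤ s+1 by linarith))).tendsto
      rw [Real.zero_rpow (by linarith)] at this
      simpa using (this.mono_left nhdsWithin_le_nhds).div_const |s|
    refine squeeze_zero_norm' ?_ (hlim.mono_left (nhdsWithin_mono 0 (by intro x hx; exact hx)))
    · filter_upwards [self_mem_nhdsWithin] with v hv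
      rcases eq_or_lt_of_le (mem_Ici.mp hv) with h | h
      · rw [← h]
        have hF0' : F 0 = 0 := by simp [hF]
        rw [hF0', Real.zero_rpow (show s+1 ≠ 0 by linarith), norm_zero, zero_div]
      · exact hb v h
  have hint1 : IntegrableOn (fun v : ℝ => v ^ (s-1) * (Real.exp (-v) - 1)) (Ioi 0) :=
    integrableOn_B h1 h2
  have hint2 : IntegrableOn (fun v : ℝ => v ^ s / s * Real.exp (-v)) (Ioi 0) := by
    have h0 : IntegrableOn (fun x : ℝ => x ^ (s+1-1) * Real.exp (-x) / s) (Ioi 0) :=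
      (integrableOn_rpow_exp (c := s + 1) (by linarith)).div_const s
    refine h0.congr_fun (fun x _ => ?_) measurableSet_Ioi
    simp only [add_sub_cancel_right]
    ring
  have hf'int : IntegrableOn
      (fun v => v ^ (s-1) * (Real.exp (-v) - 1) - v ^ s / s * Real.exp (-v)) (Ioi 0) :=
    hint1.sub hint2
  have htop : Tendsto F atTop (𝓝 0) := by
    have h1' : Tendsto (fun v : ℝ => v ^ s / s) atTop (𝓝 0) := by
      simpa using (tendsto_rpow_neg_atTop (y := -s) (by linarith)).div_const s
    have h2' : Tendsto (fun v : ℝ => Real.exp (-v) - 1) atTop (𝓝 (0 - 1)) := by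
      refine Tendsto.sub_const ?_ 1
      exact Real.tendsto_exp_neg_atTop_nhds_zero
    have := h1'.mul h2'
    simpa using this
  have key := integral_Ioi_of_hasDerivAt_of_tendsto hcont hderiv hf'int htop
  have hF0 : F 0 = 0 := by simp [hF]
  rw [hF0, sub_zero] at key
  have split := integral_sub hint1 hint2
  rw [key] at split
  have : ∫ v in Ioi (0:ℝ), v ^ s / s * Real.exp (-v)
      = Real.Gamma (s+1) / s := by
    rw [Real.Gamma_eq_integral (by linarith : (0:ℝ) < s + 1)]
    rw [← integral_div]
    refine setIntegral_congr_fun measurableSet_Ioi (fun x _ => ?_)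
    simp only [add_sub_cancel_right]
    ring
  have hgamma : Real.Gamma (s+1) = s * Real.Gamma s := Real.Gamma_add_one (ne_of_lt h2)
  have hs : s ≠ 0 := ne_of_lt h2
  have : ∫ v in Ioi (0:ℝ), v ^ (s-1) * (Real.exp (-v) - 1) = Real.Gamma (s+1)/s := by
    linarith [split, this]
  rw [this, hgamma]
  field_simp



lemma integral_scale (h : ℝ → ℝ) {c : ℝ} (hc : 0 < c) :
    ∫ t in Ioi (0:ℝ), h t = c * ∫ u in Ioi (0:ℝ), h (c * u) := by
  rw [MeasureTheory.integral_comp_mul_left_Ioi h 0 hc, mul_zero, smul_eq_mul]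
  rw [← mul_assoc, mul_inv_cancel₀ (ne_of_gt hc), one_mul]

lemma integral_comp_div (h : ℝ → ℝ) {a : ℝ} (ha : 0 < a) :
    ∫ t in Ioi (0:ℝ), h t = ∫ u in Ioi (0:ℝ), (a / u ^ 2) * h (a / u) := by
  set g : ℝ → ℝ := fun u => h (a * u) with hg
  have inv : ∫ u in Ioi (0:ℝ), g u
      = ∫ x in Ioi (0:ℝ), (|(-1:ℝ)| * x ^ ((-1:ℝ) - 1)) • g (x ^ (-1:ℝ)) :=
    (MeasureTheory.integral_comp_rpow_Ioi g (p := -1) (by norm_num)).symm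
  rw [integral_scale h ha, ← hg, inv, ← MeasureTheory.integral_const_mul]
  refine setIntegral_congr_fun measurableSet_Ioi (fun u hu => ?_)
  have hu0 : (0:ℝ) < u := hu
  have h1 : u ^ ((-1:ℝ) - 1) = (u ^ 2)⁻¹ := by
    rw [show ((-1:ℝ) - 1) = -(2:ℝ) by norm_num, Real.rpow_neg hu0.le,
      show ((2:ℝ):ℝ) = ((2:ℕ):ℝ) by norm_num, Real.rpow_natCast]
  have h2 : u ^ (-1:ℝ) = u⁻¹ := Real.rpow_neg_one u
  rw [abs_neg, abs_one, one_mul, h1, h2, smul_eq_mul, hg]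
  have : a * u⁻¹ = a / u := (div_eq_mul_inv a u).symm
  simp only [this]
  ring


lemma rpow_mul_besselK {μ z : ℝ} (hz : 0 < z) :
    z ^ μ * besselK (-μ) z = 2 ^ (μ - 1) * Jint μ (z ^ 2 / 4) := by
  have ha : (0:ℝ) < z ^ 2 / 4 := by positivity
  have hc : (0:ℝ) < 2 / z := by positivity
  set a := z ^ 2 / 4 with hadef
  set c := (2:ℝ) / z with hcdef
  have S1 : (∫ s in Ioi (0:ℝ), s ^ (-μ - 1) * Real.exp (-(z / 2) * (s + 1 / s)))
      = c ^ (-μ) * ∫ t in Ioi (0:ℝ), t ^ (-μ - 1) * Real.exp (-t - a / t) := by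
    rw [integral_scale (fun s => s ^ (-μ - 1) * Real.exp (-(z / 2) * (s + 1 / s))) hc]
    rw [← MeasureTheory.integral_const_mul, ← MeasureTheory.integral_const_mul]
    refine setIntegral_congr_fun measurableSet_Ioi (fun u hu => ?_)
    have hu0 : (0:ℝ) < u := hu
    have e1 : (c * u) ^ (-μ - 1) = c ^ (-μ - 1) * u ^ (-μ - 1) :=
      Real.mul_rpow hc.le hu0.le
    have e2 : -(z / 2) * (c * u + 1 / (c * u)) = -u - a / u := by
      rw [hcdef, hadef]
      field_simp
      ring
    have e3 : c * c ^ (-μ - 1) = c ^ (-μ) := by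
      nth_rewrite 1 [← Real.rpow_one c]
      rw [← Real.rpow_add hc]
      norm_num
    simp only [e1, e2]
    rw [← e3]
    ring
  have S2 : (∫ t in Ioi (0:ℝ), t ^ (-μ - 1) * Real.exp (-t - a / t))
      = a ^ (-μ) * Jint μ a := by
    rw [integral_comp_div (fun t => t ^ (-μ - 1) * Real.exp (-t - a / t)) ha, Jint,
      ← MeasureTheory.integral_const_mul]
    refine setIntegral_congr_fun measurableSet_Ioi (fun u hu => ?_)
    have hu0 : (0:ℝ) < u := hu
    have e1 : (a / u) ^ (-μ - 1) = a ^ (-μ - 1) / u ^ (-μ - 1) :=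
      Real.div_rpow ha.le hu0.le _
    have e2 : -(a / u) - a / (a / u) = -u - a / u := by
      field_simp
      ring
    have e3 : a / u ^ 2 * (a ^ (-μ - 1) / u ^ (-μ - 1)) = a ^ (-μ) * u ^ (μ - 1) := by
      rw [div_mul_div_comm]
      have n1 : a * a ^ (-μ - 1) = a ^ (-μ) := by
        nth_rewrite 1 [← Real.rpow_one a]
        rw [← Real.rpow_add ha]; norm_num
      have n2 : u ^ (μ - 1) * (u ^ 2 * u ^ (-μ - 1)) = 1 := by
        rw [show (u:ℝ) ^ 2 = u ^ (2:ℝ) by rw [← Real.rpow_natCast u 2]; norm_num,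
          ← Real.rpow_add hu0, ← Real.rpow_add hu0]
        rw [show μ - 1 + (2 + (-μ - 1)) = 0 by ring, Real.rpow_zero]
      rw [n1, div_eq_iff (by positivity), mul_assoc, n2, mul_one]
    simp only [e1, e2]
    linear_combination Real.exp (-u - a / u) * e3
  rw [besselK, S1, S2]
  have cst : z ^ μ * (1 / 2) * (c ^ (-μ) * a ^ (-μ)) = 2 ^ (μ - 1) := by
    have : c * a = z / 2 := by rw [hcdef, hadef]; field_simp; ring
    rw [← Real.mul_rpow hc.le ha.le, this,
      Real.div_rpow hz.le (by norm_num : (0:ℝ) ≤ 2), Real.rpow_neg (by positivity)]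
    rw [Real.rpow_sub (by norm_num : (0:ℝ) < 2), Real.rpow_one]
    field_simp [ne_of_gt (Real.rpow_pos_of_pos hz μ)]
    have h2 : (2:ℝ) ^ μ * 2 ^ (-μ) = 1 := by
      rw [← Real.rpow_add (by norm_num : (0:ℝ) < 2)]; norm_num
    linear_combination (-1) * h2
  calc z ^ μ * ((1:ℝ)/2 * (c ^ (-μ) * (a ^ (-μ) * Jint μ a)))
      = z ^ μ * (1 / 2) * (c ^ (-μ) * a ^ (-μ)) * Jint μ a := by ring
    _ = 2 ^ (μ - 1) * Jint μ a := by rw [cst]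


lemma abs_exp_neg_sub_one_le_min {x : ℝ} (hx : 0 ≤ x) :
    |Real.exp (-x) - 1| ≤ min x 1 :=
  le_min (abs_exp_neg_sub_one_le hx) (abs_exp_neg_sub_one_le_one hx)

lemma taylor_rpow {x : ℝ} (hx : 0 ≤ x) {β : ℝ} (h1 : 1 ≤ β) (h2 : β ≤ 2) :
    Real.exp (-x) - 1 + x ≤ x ^ β := by
  rcases le_or_gt x 1 with h | h
  · rcases eq_or_lt_of_le hx with rfl | hx0
    · simp [Real.zero_rpow (by linarith : β ≠ 0)]
    · calc Real.exp (-x) - 1 + x ≤ x ^ 2 / 2 := exp_neg_taylor_le_sq hx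
        _ ≤ x ^ (2:ℝ) := by
            rw [show x ^ (2:ℝ) = x ^ (2:ℕ) by rw [← Real.rpow_natCast x 2]; norm_num]
            linarith [sq_nonneg x]
        _ ≤ x ^ β := Real.rpow_le_rpow_of_exponent_ge hx0 h h2
  · calc Real.exp (-x) - 1 + x ≤ x := exp_neg_taylor_le_self hx
      _ = x ^ (1:ℝ) := (Real.rpow_one x).symm
      _ ≤ x ^ β := Real.rpow_le_rpow_of_exponent_le h.le h1

section main
variable {μ : ℝ} (hμ1 : 0 < μ) (hμ2 : μ < 1/2)

-- continuity helpers
lemma contOn_D {a : ℝ} : ContinuousOn (fun t : ℝ => t ^ (μ-1) * (Real.exp (-(a/t)) - 1)) (Ioi 0) := by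
  refine (contOn_rpow _ (le_refl _)).mul (ContinuousOn.sub ?_ continuousOn_const)
  exact (continuousOn_const.div continuousOn_id (fun t ht => ne_of_gt ht)).neg.rexp

lemma contOn_E {a : ℝ} : ContinuousOn
    (fun t : ℝ => t ^ (μ-1) * (Real.exp (-t) - 1) * (Real.exp (-(a/t)) - 1)) (Ioi 0) := by
  refine (((contOn_rpow _ (le_refl _)).mul ?_).mul (ContinuousOn.sub ?_ continuousOn_const))
  · exact (continuousOn_id.neg.rexp.sub continuousOn_const)
  · exact (continuousOn_const.div continuousOn_id (fun t ht => ne_of_gt ht)).neg.rexp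

lemma contOn_G {a : ℝ} : ContinuousOn
    (fun t : ℝ => t ^ (μ-1) * (Real.exp (-t) - 1) * (Real.exp (-(a/t)) - 1 + a/t)) (Ioi 0) := by
  refine (((contOn_rpow _ (le_refl _)).mul ?_).mul (ContinuousOn.add (ContinuousOn.sub ?_ continuousOn_const) ?_))
  · exact (continuousOn_id.neg.rexp.sub continuousOn_const)
  · exact (continuousOn_const.div continuousOn_id (fun t ht => ne_of_gt ht)).neg.rexp
  · exact continuousOn_const.div continuousOn_id (fun t ht => ne_of_gt ht)

include hμ1 hμ2

lemma intD {a : ℝ} (ha : 0 < a) :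
    IntegrableOn (fun t : ℝ => t ^ (μ-1) * (Real.exp (-(a/t)) - 1)) (Ioi 0) := by
  rw [← Ioc_union_Ioi_eq_Ioi (zero_le_one (α := ℝ)), integrableOn_union]
  constructor
  · refine mono_helper measurableSet_Ioc (integrableOn_rpow_Ioc (c := μ-1) (by linarith))
      ((contOn_D.mono Ioc_subset_Ioi_self).aestronglyMeasurable measurableSet_Ioc) ?_
    intro x hx
    rw [abs_mul, abs_of_nonneg (Real.rpow_nonneg hx.1.le _)]
    calc x ^ (μ-1) * |Real.exp (-(a/x)) - 1| ≤ x ^ (μ-1) * 1 :=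
          mul_le_mul_of_nonneg_left (abs_exp_neg_sub_one_le_one (div_nonneg ha.le hx.1.le))
            (Real.rpow_nonneg hx.1.le _)
      _ = x ^ (μ-1) := mul_one _
  · refine mono_helper measurableSet_Ioi
      ((integrableOn_Ioi_rpow_of_lt (show μ-2 < -1 by linarith) zero_lt_one).const_mul a)
      ((contOn_D.mono (Ioi_subset_Ioi zero_le_one)).aestronglyMeasurable measurableSet_Ioi) ?_
    intro x hx
    have hx0 : (0:ℝ) < x := lt_trans zero_lt_one hx
    rw [abs_mul, abs_of_nonneg (Real.rpow_nonneg hx0.le _)]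
    calc x ^ (μ-1) * |Real.exp (-(a/x)) - 1| ≤ x ^ (μ-1) * (a/x) :=
          mul_le_mul_of_nonneg_left (abs_exp_neg_sub_one_le (div_nonneg ha.le hx0.le))
            (Real.rpow_nonneg hx0.le _)
      _ = a * x ^ (μ-2) := by
          rw [show (μ:ℝ)-2 = (μ-1) + (-1) by ring, Real.rpow_add hx0, Real.rpow_neg_one]
          field_simp
  
lemma intE {a : ℝ} (ha : 0 < a) :
    IntegrableOn (fun t : ℝ => t ^ (μ-1) * (Real.exp (-t) - 1) * (Real.exp (-(a/t)) - 1)) (Ioi 0) := by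
  rw [← Ioc_union_Ioi_eq_Ioi (zero_le_one (α := ℝ)), integrableOn_union]
  constructor
  · refine mono_helper measurableSet_Ioc (integrableOn_rpow_Ioc (c := μ) (show -1 < μ by linarith))
      ((contOn_E.mono Ioc_subset_Ioi_self).aestronglyMeasurable measurableSet_Ioc) ?_
    intro x hx
    rw [abs_mul, abs_mul, abs_of_nonneg (Real.rpow_nonneg hx.1.le _)]
    calc x ^ (μ-1) * |Real.exp (-x) - 1| * |Real.exp (-(a/x)) - 1|
        ≤ x ^ (μ-1) * x * 1 := by
          refine mul_le_mul (mul_le_mul_of_nonneg_left (abs_exp_neg_sub_one_le hx.1.le)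
            (Real.rpow_nonneg hx.1.le _)) (abs_exp_neg_sub_one_le_one (div_nonneg ha.le hx.1.le))
            (abs_nonneg _) (mul_nonneg (Real.rpow_nonneg hx.1.le _) hx.1.le)
      _ = x ^ μ := by
          rw [mul_one, ← Real.rpow_add_one (ne_of_gt hx.1)]; ring_nf
  · refine mono_helper measurableSet_Ioi
      ((integrableOn_Ioi_rpow_of_lt (show μ-2 < -1 by linarith) zero_lt_one).const_mul a)
      ((contOn_E.mono (Ioi_subset_Ioi zero_le_one)).aestronglyMeasurable measurableSet_Ioi) ?_
    intro x hx
    have hx0 : (0:ℝ) < x := lt_trans zero_lt_one hx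
    rw [abs_mul, abs_mul, abs_of_nonneg (Real.rpow_nonneg hx0.le _)]
    calc x ^ (μ-1) * |Real.exp (-x) - 1| * |Real.exp (-(a/x)) - 1|
        ≤ x ^ (μ-1) * 1 * (a/x) := by
          refine mul_le_mul (mul_le_mul_of_nonneg_left (abs_exp_neg_sub_one_le_one hx0.le)
            (Real.rpow_nonneg hx0.le _)) (abs_exp_neg_sub_one_le (div_nonneg ha.le hx0.le))
            (abs_nonneg _) (mul_nonneg (Real.rpow_nonneg hx0.le _) zero_le_one)
      _ = a * x ^ (μ-2) := by
          rw [mul_one, show (μ:ℝ)-2 = (μ-1) + (-1) by ring, Real.rpow_add hx0, Real.rpow_neg_one]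
          field_simp

lemma intG {a : ℝ} (ha : 0 < a) :
    IntegrableOn (fun t : ℝ => t ^ (μ-1) * (Real.exp (-t) - 1) * (Real.exp (-(a/t)) - 1 + a/t)) (Ioi 0) := by
  have h1 := intE hμ1 hμ2 ha
  have h2 : IntegrableOn (fun t : ℝ => a * (t ^ ((μ-1) - 1) * (Real.exp (-t) - 1))) (Ioi 0) :=
    (integrableOn_B (show -1 < μ - 1 by linarith) (by linarith)).const_mul a
  have h12 : IntegrableOn ((fun t : ℝ => t ^ (μ-1) * (Real.exp (-t) - 1) * (Real.exp (-(a/t)) - 1))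
      + fun t : ℝ => a * (t ^ ((μ-1) - 1) * (Real.exp (-t) - 1))) (Ioi 0) := h1.add h2
  refine h12.congr_fun (fun x hx => ?_) measurableSet_Ioi
  have hx0 : (0:ℝ) < x := hx
  have hkey : x ^ (μ-1) * (a / x) = a * x ^ (μ-1-1) := by
    rw [show μ - 1 - 1 = (μ-1) + (-1) by ring, Real.rpow_add hx0, Real.rpow_neg_one]
    field_simp
  simp only [Pi.add_apply]
  linear_combination (1 - Real.exp (-x)) * hkey

end main

section main2
variable {μ : ℝ} (hμ1 : 0 < μ) (hμ2 : μ < 1/2)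
include hμ1 hμ2

lemma Jint_split {a : ℝ} (ha : 0 < a) :
    Jint μ a = Real.Gamma μ + ((∫ t in Ioi (0:ℝ), t ^ (μ-1) * (Real.exp (-(a/t)) - 1))
      + ∫ t in Ioi (0:ℝ), t ^ (μ-1) * (Real.exp (-t) - 1) * (Real.exp (-(a/t)) - 1)) := by
  have hA : IntegrableOn (fun t : ℝ => t ^ (μ-1) * Real.exp (-t)) (Ioi 0) :=
    integrableOn_rpow_exp hμ1
  have hD := intD hμ1 hμ2 ha
  have hE := intE hμ1 hμ2 ha
  have key : EqOn (fun x : ℝ => x ^ (μ-1) * Real.exp (-x - a/x))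
      (fun x : ℝ => x ^ (μ-1) * Real.exp (-x) + (x ^ (μ-1) * (Real.exp (-(a/x)) - 1)
        + x ^ (μ-1) * (Real.exp (-x) - 1) * (Real.exp (-(a/x)) - 1))) (Ioi 0) := by
    intro x hx
    have : Real.exp (-x - a/x) = Real.exp (-x) * Real.exp (-(a/x)) := by
      rw [← Real.exp_add]; ring_nf
    simp only [this]
    ring
  have i1 : (∫ x in Ioi (0:ℝ), (x ^ (μ-1) * (Real.exp (-(a/x)) - 1)
        + x ^ (μ-1) * (Real.exp (-x) - 1) * (Real.exp (-(a/x)) - 1)))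
      = (∫ t in Ioi (0:ℝ), t ^ (μ-1) * (Real.exp (-(a/t)) - 1))
        + ∫ t in Ioi (0:ℝ), t ^ (μ-1) * (Real.exp (-t) - 1) * (Real.exp (-(a/t)) - 1) :=
    integral_add hD hE
  have i2 : (∫ x in Ioi (0:ℝ), (x ^ (μ-1) * Real.exp (-x) + (x ^ (μ-1) * (Real.exp (-(a/x)) - 1)
        + x ^ (μ-1) * (Real.exp (-x) - 1) * (Real.exp (-(a/x)) - 1))))
      = (∫ t in Ioi (0:ℝ), t ^ (μ-1) * Real.exp (-t))
        + ∫ x in Ioi (0:ℝ), (x ^ (μ-1) * (Real.exp (-(a/x)) - 1)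
        + x ^ (μ-1) * (Real.exp (-x) - 1) * (Real.exp (-(a/x)) - 1)) :=
    integral_add hA (hD.add hE)
  rw [Jint, setIntegral_congr_fun measurableSet_Ioi key, i2, i1]
  have hG : ∫ t in Ioi (0:ℝ), t ^ (μ-1) * Real.exp (-t) = Real.Gamma μ := by
    rw [Real.Gamma_eq_integral hμ1]
    exact setIntegral_congr_fun measurableSet_Ioi (fun x _ => mul_comm _ _)
  rw [hG]

lemma Iterm_eq {a : ℝ} (ha : 0 < a) :
    (∫ t in Ioi (0:ℝ), t ^ (μ-1) * (Real.exp (-(a/t)) - 1)) = Real.Gamma (-μ) * a ^ μ := by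
  rw [integral_scale (fun t => t ^ (μ-1) * (Real.exp (-(a/t)) - 1)) ha]
  have step1 : EqOn (fun u : ℝ => (a*u) ^ (μ-1) * (Real.exp (-(a/(a*u))) - 1))
      (fun u : ℝ => a ^ (μ-1) * (u ^ (μ-1) * (Real.exp (-(1/u)) - 1))) (Ioi 0) := by
    intro u hu
    have hu0 : (0:ℝ) < u := hu
    have e1 : a/(a*u) = 1/u := by field_simp
    simp only [Real.mul_rpow ha.le hu0.le, e1]
    ring
  rw [setIntegral_congr_fun measurableSet_Ioi step1, MeasureTheory.integral_const_mul]
  have inv : (∫ u in Ioi (0:ℝ), u ^ (μ-1) * (Real.exp (-(1/u)) - 1)) = Real.Gamma (-μ) := by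
    rw [integral_comp_div (fun u => u ^ (μ-1) * (Real.exp (-(1/u)) - 1)) one_pos]
    have step2 : EqOn (fun v : ℝ => ((1:ℝ)/v^2) * ((1/v) ^ (μ-1) * (Real.exp (-(1/(1/v))) - 1)))
        (fun v : ℝ => v ^ (-μ-1) * (Real.exp (-v) - 1)) (Ioi 0) := by
      intro v hv
      have hv0 : (0:ℝ) < v := hv
      have e1 : (1:ℝ)/(1/v) = v := one_div_one_div v
      have e2 : ((1:ℝ)/v) ^ (μ-1) = v ^ (1-μ) := by
        rw [one_div, Real.inv_rpow hv0.le, ← Real.rpow_neg hv0.le]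
        ring_nf
      have e3 : (1:ℝ)/v^2 * v^(1-μ) = v^(-μ-1) := by
        have n1 : v ^ (1-μ) * v ^ (-2:ℝ) = v ^ (-μ-1) := by
          rw [← Real.rpow_add hv0]; ring_nf
        have n2 : v ^ (-2:ℝ) = 1/v^2 := by
          rw [Real.rpow_neg hv0.le, one_div,
            show (v:ℝ) ^ 2 = v ^ (2:ℝ) by rw [← Real.rpow_natCast v 2]; norm_num]
        rw [← n1, n2]; ring
      simp only [e1, e2]
      linear_combination (Real.exp (-v) - 1) * e3
    rw [setIntegral_congr_fun measurableSet_Ioi step2]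
    have h := Gamma_eq_integral_sub_one (s := -μ) (by linarith) (by linarith)
    rw [← h]
  rw [inv]
  have h2 : a * a ^ (μ-1) = a ^ μ := by
    rw [mul_comm, ← Real.rpow_add_one (ne_of_gt ha)]
    congr 1
    ring
  calc a * (a ^ (μ-1) * Real.Gamma (-μ)) = (a * a ^ (μ-1)) * Real.Gamma (-μ) := by ring
    _ = Real.Gamma (-μ) * a ^ μ := by rw [h2]; ring

lemma Rterm_eq {a : ℝ} (ha : 0 < a) :
    (∫ t in Ioi (0:ℝ), t ^ (μ-1) * (Real.exp (-t) - 1) * (Real.exp (-(a/t)) - 1))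
      = -(Real.Gamma (μ-1)) * a
        + ∫ t in Ioi (0:ℝ), t ^ (μ-1) * (Real.exp (-t) - 1) * (Real.exp (-(a/t)) - 1 + a/t) := by
  have hG := intG hμ1 hμ2 ha
  have hF : IntegrableOn (fun t : ℝ => a * (t ^ ((μ-1)-1) * (Real.exp (-t) - 1))) (Ioi 0) :=
    (integrableOn_B (show -1 < μ-1 by linarith) (by linarith)).const_mul a
  have key : EqOn (fun t : ℝ => t ^ (μ-1) * (Real.exp (-t) - 1) * (Real.exp (-(a/t)) - 1))
      (fun t : ℝ => t ^ (μ-1) * (Real.exp (-t) - 1) * (Real.exp (-(a/t)) - 1 + a/t)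
        - a * (t ^ ((μ-1)-1) * (Real.exp (-t) - 1))) (Ioi 0) := by
    intro x hx
    have hx0 : (0:ℝ) < x := hx
    have hkey : x ^ (μ-1) * (a / x) = a * x ^ (μ-1-1) := by
      rw [show μ - 1 - 1 = (μ-1) + (-1) by ring, Real.rpow_add hx0, Real.rpow_neg_one]
      field_simp
    simp only []
    linear_combination (1 - Real.exp (-x)) * hkey
  rw [setIntegral_congr_fun measurableSet_Ioi key, integral_sub hG hF,
    MeasureTheory.integral_const_mul, Gamma_eq_integral_sub_one (show (-1:ℝ) < μ-1 by linarith) (by linarith)]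
  ring

lemma Rem2_bound : ∃ K : ℝ, ∀ a : ℝ, 0 < a →
    |∫ t in Ioi (0:ℝ), t ^ (μ-1) * (Real.exp (-t) - 1) * (Real.exp (-(a/t)) - 1 + a/t)|
      ≤ K * a ^ (1 + μ/2) := by
  set β : ℝ := 1 + μ/2 with hβ
  have hβ1 : 1 ≤ β := by rw [hβ]; linarith
  have hβ2 : β ≤ 2 := by rw [hβ]; linarith
  set gK : ℝ → ℝ := fun t => t ^ (μ-1-β) * min t 1 with hgK
  have contK : ContinuousOn gK (Ioi 0) :=
    (contOn_rpow _ (le_refl _)).mul (continuous_id.min continuous_const).continuousOn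
  have intK : IntegrableOn gK (Ioi 0) := by
    rw [← Ioc_union_Ioi_eq_Ioi (zero_le_one (α := ℝ)), integrableOn_union]
    constructor
    · refine mono_helper measurableSet_Ioc (integrableOn_rpow_Ioc (c := μ-β) (by rw [hβ]; linarith))
        ((contK.mono Ioc_subset_Ioi_self).aestronglyMeasurable measurableSet_Ioc) ?_
      intro x hx
      rw [hgK]
      simp only []
      rw [abs_mul, abs_of_nonneg (Real.rpow_nonneg hx.1.le _),
        abs_of_nonneg (le_min hx.1.le zero_le_one)]
      calc x ^ (μ-1-β) * min x 1 ≤ x ^ (μ-1-β) * x :=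
            mul_le_mul_of_nonneg_left (min_le_left _ _) (Real.rpow_nonneg hx.1.le _)
        _ = x ^ (μ-β) := by
            rw [← Real.rpow_add_one (ne_of_gt hx.1)]; ring_nf
    · refine mono_helper measurableSet_Ioi
        (integrableOn_Ioi_rpow_of_lt (show μ-1-β < -1 by rw [hβ]; linarith) zero_lt_one)
        ((contK.mono (Ioi_subset_Ioi zero_le_one)).aestronglyMeasurable measurableSet_Ioi) ?_
      intro x hx
      have hx0 : (0:ℝ) < x := lt_trans zero_lt_one hx
      rw [hgK]
      simp only []
      rw [abs_mul, abs_of_nonneg (Real.rpow_nonneg hx0.le _),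
        abs_of_nonneg (le_min hx0.le zero_le_one)]
      calc x ^ (μ-1-β) * min x 1 ≤ x ^ (μ-1-β) * 1 :=
            mul_le_mul_of_nonneg_left (min_le_right _ _) (Real.rpow_nonneg hx0.le _)
        _ = x ^ (μ-1-β) := mul_one _
  refine ⟨∫ t in Ioi (0:ℝ), gK t, fun a ha => ?_⟩
  have hab : Integrable (fun t : ℝ => a ^ β * gK t) (volume.restrict (Ioi 0)) :=
    intK.const_mul _
  have bound : ∀ᵐ t ∂(volume.restrict (Ioi (0:ℝ))),
      ‖t ^ (μ-1) * (Real.exp (-t) - 1) * (Real.exp (-(a/t)) - 1 + a/t)‖ ≤ a ^ β * gK t := by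
    filter_upwards [ae_restrict_mem measurableSet_Ioi] with t ht
    have ht0 : (0:ℝ) < t := ht
    rw [Real.norm_eq_abs, abs_mul, abs_mul, abs_of_nonneg (Real.rpow_nonneg ht0.le _),
      abs_of_nonneg (exp_neg_taylor_nonneg (a/t))]
    have b1 : |Real.exp (-t) - 1| ≤ min t 1 := abs_exp_neg_sub_one_le_min ht0.le
    have b2 : Real.exp (-(a/t)) - 1 + a/t ≤ (a/t) ^ β :=
      taylor_rpow (by positivity) hβ1 hβ2
    have b3 : ((a:ℝ)/t) ^ β = a ^ β * t ^ (-β) := by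
      rw [Real.div_rpow ha.le ht0.le, Real.rpow_neg ht0.le, div_eq_mul_inv]
    calc t ^ (μ-1) * |Real.exp (-t) - 1| * (Real.exp (-(a/t)) - 1 + a/t)
        ≤ t ^ (μ-1) * min t 1 * (a ^ β * t ^ (-β)) := by
          refine mul_le_mul (mul_le_mul_of_nonneg_left b1 (Real.rpow_nonneg ht0.le _))
            (by rw [← b3]; exact b2) (exp_neg_taylor_nonneg _) ?_
          exact mul_nonneg (Real.rpow_nonneg ht0.le _) (le_min ht0.le zero_le_one)
      _ = a ^ β * gK t := by
          rw [hgK]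
          simp only []
          rw [show μ-1-β = (μ-1) + (-β) by ring, Real.rpow_add ht0]
          ring
  have := MeasureTheory.norm_integral_le_of_norm_le hab bound
  rw [MeasureTheory.integral_const_mul] at this
  rw [Real.norm_eq_abs] at this
  calc |∫ t in Ioi (0:ℝ), t ^ (μ-1) * (Real.exp (-t) - 1) * (Real.exp (-(a/t)) - 1 + a/t)|
      ≤ a ^ β * ∫ t in Ioi (0:ℝ), gK t := this
    _ = (∫ t in Ioi (0:ℝ), gK t) * a ^ (1 + μ/2) := by rw [hβ]; ring

lemma Jint_expansion : ∃ K : ℝ, ∀ a : ℝ, 0 < a →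
    |Jint μ a - (Real.Gamma μ + Real.Gamma (-μ) * a ^ μ - Real.Gamma (μ-1) * a)|
      ≤ K * a ^ (1 + μ/2) := by
  obtain ⟨K, hK⟩ := Rem2_bound hμ1 hμ2
  refine ⟨K, fun a ha => ?_⟩
  rw [Jint_split hμ1 hμ2 ha, Iterm_eq hμ1 hμ2 ha, Rterm_eq hμ1 hμ2 ha]
  have : Real.Gamma μ + (Real.Gamma (-μ) * a ^ μ + (-(Real.Gamma (μ-1)) * a
        + ∫ t in Ioi (0:ℝ), t ^ (μ-1) * (Real.exp (-t) - 1) * (Real.exp (-(a/t)) - 1 + a/t)))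
      - (Real.Gamma μ + Real.Gamma (-μ) * a ^ μ - Real.Gamma (μ-1) * a)
      = ∫ t in Ioi (0:ℝ), t ^ (μ-1) * (Real.exp (-t) - 1) * (Real.exp (-(a/t)) - 1 + a/t) := by
    ring
  rw [this]
  exact hK a ha

end main2


lemma const_key {κ : ℝ} (h0 : 0 < κ) (h1 : κ < 1) :
    ((2:ℝ) ^ ((3-κ)/2) * Real.Gamma κ * Real.cos (π*κ/2) / (Real.sqrt π * Real.Gamma (κ/2))
      * 2 ^ ((1-κ)/2 - 1)) * Real.Gamma ((1-κ)/2) = 1 := by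
  have hsπ : (0:ℝ) < Real.sqrt π := Real.sqrt_pos.mpr Real.pi_pos
  have hG1 : 0 < Real.Gamma (κ/2) := Real.Gamma_pos_of_pos (by linarith)
  have hc : 0 < Real.cos (π*κ/2) := by
    apply Real.cos_pos_of_mem_Ioo
    constructor
    · nlinarith [Real.pi_pos]
    · nlinarith [Real.pi_pos]
  have hdup := Real.Gamma_mul_Gamma_add_half (κ/2)
  rw [show 2*(κ/2) = κ by ring, show κ/2 + 1/2 = (κ+1)/2 by ring] at hdup
  have hrefl := Real.Gamma_mul_Gamma_one_sub ((κ+1)/2)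
  rw [show 1 - (κ+1)/2 = (1-κ)/2 by ring,
    show π * ((κ+1)/2) = π*κ/2 + π/2 by ring, Real.sin_add_pi_div_two] at hrefl
  have hrefl' : Real.Gamma ((κ+1)/2) * Real.Gamma ((1-κ)/2) * Real.cos (π*κ/2) = π := by
    rw [hrefl]; field_simp
  have hpow : (2:ℝ) ^ ((3-κ)/2) * 2 ^ ((1-κ)/2 - 1) = 2 ^ (1-κ) := by
    rw [← Real.rpow_add (by norm_num : (0:ℝ) < 2)]
    congr 1; ring
  have hsq : Real.sqrt π * Real.sqrt π = π := Real.mul_self_sqrt Real.pi_pos.le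
  rw [div_mul_eq_mul_div, div_mul_eq_mul_div, div_eq_one_iff_eq (by positivity)]
  have goal' : ((2:ℝ) ^ ((3-κ)/2) * Real.Gamma κ * Real.cos (π*κ/2) * 2 ^ ((1-κ)/2 - 1)
        * Real.Gamma ((1-κ)/2)) * Real.sqrt π
      = (Real.sqrt π * Real.Gamma (κ/2)) * Real.sqrt π := by
    linear_combination (Real.Gamma κ * Real.cos (π*κ/2) * Real.Gamma ((1-κ)/2) * Real.sqrt π) * hpow
      - (Real.cos (π*κ/2) * Real.Gamma ((1-κ)/2)) * hdup
      + Real.Gamma (κ/2) * hrefl' - Real.Gamma (κ/2) * hsq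
  exact mul_right_cancel₀ (ne_of_gt hsπ) goal'

/-- For `κ ∈ (0,1)`, as `z → 0⁺`,
`θ_κ(z) = (Γ((κ+1)/2)/(2^{1−κ} Γ((3−κ)/2))) z^{1−κ} − z²/(2(κ+1)) + o(z²)`;
in particular `θ_κ(z) → 0`. -/
theorem theta_expansion_at_zero (κ : ℝ) (hκ : κ ∈ Set.Ioo (0 : ℝ) 1) :
    (fun z : ℝ => theta κ z -
        (Real.Gamma ((κ + 1) / 2) / ((2 : ℝ) ^ (1 - κ) * Real.Gamma ((3 - κ) / 2)) *
            z ^ (1 - κ) - z ^ 2 / (2 * (κ + 1))))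
      =o[𝓝[>] (0 : ℝ)] (fun z : ℝ => z ^ 2) ∧
    Filter.Tendsto (fun z : ℝ => theta κ z) (𝓝[>] (0 : ℝ)) (𝓝 0) := by
  obtain ⟨h0, h1⟩ := hκ
  set μ : ℝ := (1-κ)/2 with hμdef
  have hμ1 : 0 < μ := by rw [hμdef]; linarith
  have hμ2 : μ < 1/2 := by rw [hμdef]; linarith
  obtain ⟨K, hK⟩ := Jint_expansion hμ1 hμ2
  set Q : ℝ := (2:ℝ)^((3-κ)/2) * Real.Gamma κ * Real.cos (π*κ/2) /
      (Real.sqrt π * Real.Gamma (κ/2)) * 2^(μ-1) with hQdef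
  have hQ : Q * Real.Gamma μ = 1 := by
    rw [hQdef, hμdef]
    exact const_key h0 h1
  have hΓμpos : 0 < Real.Gamma μ := Real.Gamma_pos_of_pos hμ1
  have g1 : Real.Gamma ((κ+1)/2) = -μ * Real.Gamma (-μ) := by
    rw [show (κ+1)/2 = -μ + 1 by rw [hμdef]; ring]
    exact Real.Gamma_add_one (by linarith : -μ ≠ 0)
  have g2 : Real.Gamma ((3-κ)/2) = μ * Real.Gamma μ := by
    rw [show (3-κ)/2 = μ + 1 by rw [hμdef]; ring]
    exact Real.Gamma_add_one (ne_of_gt hμ1)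
  have g3 : (2:ℝ)^(1-κ) * 2^(κ-1) = 1 := by
    rw [← Real.rpow_add two_pos]; norm_num
  have g4 : Real.Gamma μ = (μ-1) * Real.Gamma (μ-1) := by
    have h := Real.Gamma_add_one (show μ-1 ≠ 0 by intro h; rw [sub_eq_zero] at h; rw [h] at hμ2; norm_num at hμ2)
    rw [show μ-1+1 = μ by ring] at h
    exact h
  set B : ℝ := Real.Gamma ((κ+1)/2) / ((2:ℝ)^(1-κ) * Real.Gamma ((3-κ)/2)) with hBdef
  have hBden : (2:ℝ)^(1-κ) * Real.Gamma ((3-κ)/2) ≠ 0 :=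
    ne_of_gt (mul_pos (Real.rpow_pos_of_pos two_pos _) (Real.Gamma_pos_of_pos (by linarith)))
  have hB : B = -(Q * Real.Gamma (-μ)) * 2^(κ-1) := by
    rw [hBdef, g1, g2, div_eq_iff (ne_of_gt (mul_pos (Real.rpow_pos_of_pos two_pos _)
      (mul_pos hμ1 hΓμpos)))]
    linear_combination (Real.Gamma (-μ) * μ * (2:ℝ)^(κ-1) * (2:ℝ)^(1-κ)) * hQ
      + (μ * Real.Gamma (-μ)) * g3
  have hC : Q * Real.Gamma (μ-1) * (μ-1) = 1 := by
    rw [mul_assoc, mul_comm (Real.Gamma (μ-1)) (μ-1), ← g4]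
    exact hQ
  have hμm1 : μ - 1 = -(κ+1)/2 := by rw [hμdef]; ring
  have hC2 : Q * Real.Gamma (μ-1) * (κ+1) = -2 := by
    linear_combination (-2) * hC + (2 * Q * Real.Gamma (μ-1)) * hμm1
  have hk1 : (2:ℝ) * (κ+1) ≠ 0 := by positivity
  -- key pointwise identity
  have key : ∀ z : ℝ, z ∈ Ioi (0:ℝ) →
      theta κ z - (B * z ^ (1-κ) - z^2/(2*(κ+1)))
        = -Q * (Jint μ (z^2/4) - (Real.Gamma μ + Real.Gamma (-μ) * (z^2/4) ^ μ
            - Real.Gamma (μ-1) * (z^2/4))) := by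
    intro z hz
    have hz0 : (0:ℝ) < z := hz
    have hbes : z ^ ((1-κ)/2) * besselK ((κ-1)/2) z = 2^(μ-1) * Jint μ (z^2/4) := by
      rw [show (κ-1)/2 = -μ by rw [hμdef]; ring]
      exact rpow_mul_besselK hz0
    have htheta : theta κ z = 1 - Q * Jint μ (z^2/4) := by
      rw [theta, hQdef]
      rw [mul_assoc ((2:ℝ) ^ ((3-κ)/2) * Real.Gamma κ * Real.cos (π*κ/2) /
        (Real.sqrt π * Real.Gamma (κ/2))) (z ^ ((1-κ)/2)) (besselK ((κ-1)/2) z), hbes]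
      ring
    have hamu : ((z^2/4) : ℝ) ^ μ = z ^ (1-κ) * 2^(κ-1) := by
      have e0 : ((z^2/4) : ℝ) = (z/2)^2 := by ring
      have hzh : (0:ℝ) < z/2 := by positivity
      rw [e0, show ((z/2):ℝ)^2 = (z/2) ^ (2:ℝ) by
          rw [← Real.rpow_natCast (z/2) 2]; norm_num,
        ← Real.rpow_mul hzh.le, show (2:ℝ) * μ = 1 - κ by rw [hμdef]; ring,
        Real.div_rpow hz0.le (by norm_num : (0:ℝ) ≤ 2)]
      rw [div_eq_iff (ne_of_gt (Real.rpow_pos_of_pos two_pos _))]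
      linear_combination (-(z ^ (1-κ))) * g3
    have hz2 : z^2/(2*(κ+1)) = -(Q * Real.Gamma (μ-1)) * (z^2/4) := by
      rw [div_eq_iff hk1]
      linear_combination (z^2/2) * hC2
    rw [htheta, hB, hamu, hz2]
    linear_combination -hQ
  -- little-o part
  set Rem : ℝ → ℝ := fun a => Jint μ a - (Real.Gamma μ + Real.Gamma (-μ) * a ^ μ
    - Real.Gamma (μ-1) * a) with hRem
  have h1 : Rem =O[𝓝[>] (0:ℝ)] (fun a => a ^ (1+μ/2)) := by
    refine isBigO_iff.mpr ⟨K, ?_⟩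
    filter_upwards [self_mem_nhdsWithin] with a ha
    rw [Real.norm_eq_abs, Real.norm_eq_abs,
      abs_of_nonneg (Real.rpow_nonneg (le_of_lt ha) _)]
    exact hK a ha
  have h2 : (fun a : ℝ => a ^ (1+μ/2)) =o[𝓝[>] (0:ℝ)] (fun a => a) := by
    have ht : Tendsto (fun a : ℝ => a ^ (μ/2)) (𝓝[>] (0:ℝ)) (𝓝 0) := by
      have hcont := (Real.continuousAt_rpow_const 0 (μ/2) (Or.inr (by positivity))).tendsto
      rw [Real.zero_rpow (by positivity)] at hcont
      exact hcont.mono_left nhdsWithin_le_nhds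
    have hlo : (fun a : ℝ => a ^ (μ/2)) =o[𝓝[>] (0:ℝ)] (fun _ => (1:ℝ)) :=
      (isLittleO_one_iff ℝ).mpr ht
    have hmul := hlo.mul_isBigO (isBigO_refl (fun a : ℝ => a) (𝓝[>] (0:ℝ)))
    refine hmul.congr' ?_ ?_
    · filter_upwards [self_mem_nhdsWithin] with a ha
      rw [← Real.rpow_add_one (ne_of_gt ha) (μ/2)]
      congr 1
      ring
    · filter_upwards with a
      rw [one_mul]
  have h3 : Tendsto (fun z : ℝ => z^2/4) (𝓝[>] (0:ℝ)) (𝓝[>] (0:ℝ)) := by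
    apply tendsto_nhdsWithin_of_tendsto_nhds_of_eventually_within
    · have hcc : Tendsto (fun z : ℝ => z^2/4) (𝓝 0) (𝓝 ((0:ℝ)^2/4)) :=
        ((continuous_pow 2).div_const 4).tendsto 0
      norm_num at hcc
      exact hcc.mono_left nhdsWithin_le_nhds
    · filter_upwards [self_mem_nhdsWithin] with z hz
      have : (0:ℝ) < z := hz
      exact mem_Ioi.mpr (by positivity)
  have h4 := (h1.trans_isLittleO h2).comp_tendsto h3
  have h5 : (fun z : ℝ => z^2/4) =O[𝓝[>] (0:ℝ)] (fun z : ℝ => z^2) := by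
    refine IsBigO.of_bound (1/4) ?_
    filter_upwards with z
    rw [Real.norm_eq_abs, Real.norm_eq_abs, abs_div,
      abs_of_nonneg (by norm_num : (0:ℝ) ≤ 4)]
    linarith [abs_nonneg (z^2)]

  have h6 : (fun z : ℝ => -Q * Rem (z^2/4)) =o[𝓝[>] (0:ℝ)] (fun z : ℝ => z^2) :=
    (h4.trans_isBigO h5).const_mul_left (-Q)
  have hEq : (fun z : ℝ => theta κ z - (B * z ^ (1-κ) - z^2/(2*(κ+1))))
      =ᶠ[𝓝[>] (0:ℝ)] (fun z : ℝ => -Q * Rem (z^2/4)) := by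
    filter_upwards [self_mem_nhdsWithin] with z hz
    exact key z hz
  have ho : (fun z : ℝ => theta κ z - (B * z ^ (1-κ) - z^2/(2*(κ+1))))
      =o[𝓝[>] (0:ℝ)] (fun z : ℝ => z^2) := hEq.trans_isLittleO h6
  refine ⟨ho, ?_⟩
  -- tendsto part
  have hz2tend : Tendsto (fun z : ℝ => z^2) (𝓝[>] (0:ℝ)) (𝓝 0) := by
    have hcc : Tendsto (fun z : ℝ => z^2) (𝓝 0) (𝓝 ((0:ℝ)^2)) := (continuous_pow 2).tendsto 0
    norm_num at hcc
    exact hcc.mono_left nhdsWithin_le_nhds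
  have t1 : Tendsto (fun z : ℝ => theta κ z - (B * z ^ (1-κ) - z^2/(2*(κ+1))))
      (𝓝[>] (0:ℝ)) (𝓝 0) := ho.isBigO.trans_tendsto hz2tend
  have t2 : Tendsto (fun z : ℝ => B * z ^ (1-κ)) (𝓝[>] (0:ℝ)) (𝓝 0) := by
    have h := (Real.continuousAt_rpow_const 0 (1-κ) (Or.inr (by linarith))).tendsto
    rw [Real.zero_rpow (ne_of_gt (by linarith : (0:ℝ) < 1-κ))] at h
    have h2' : Tendsto (fun z : ℝ => z ^ (1-κ)) (𝓝[>] (0:ℝ)) (𝓝 0) :=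
      h.mono_left nhdsWithin_le_nhds
    have := h2'.const_mul B
    simpa using this
  have t3 : Tendsto (fun z : ℝ => z^2/(2*(κ+1))) (𝓝[>] (0:ℝ)) (𝓝 0) := by
    simpa using hz2tend.div_const (2*(κ+1))
  have tsum := t1.add (t2.sub t3)
  norm_num at tsum
  refine tsum.congr (fun z => by ring)
end

section
/- For every x ∈ ℝ, the spectral density f satisfies the Fourier inversion identity ∫_ℝ e^{iλx} f(λ) dλ = ∑_{j=0}^n A_j cos(w_j x)/(1+x²)^{κ_j/2}; in particular, f is the spectral density of the covariance function r(x) = ∑_{j=0}^n A_j cos(w_j x)/(1+x²)^{κ_j/2}. -/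
open Real Filter Topology MeasureTheory

/-- The spectral density
`f(λ) = (c_1(κ_0)/2) A_0 K_{(κ_0−1)/2}(|λ|)|λ|^{(κ_0−1)/2}
  + ∑_{j=1}^n (c_1(κ_j)/2) A_j (K_{(κ_j−1)/2}(|λ+w_j|)|λ+w_j|^{(κ_j−1)/2}
                              + K_{(κ_j−1)/2}(|λ−w_j|)|λ−w_j|^{(κ_j−1)/2})`,
with `c_1(κ_0) = 2·2^{(1−κ_0)/2}/(√π Γ(κ_0/2))` and
`c_1(κ_j) = 2^{(1−κ_j)/2}/(√π Γ(κ_j/2))` for `j ≥ 1`. -/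
noncomputable def specDensity (n : ℕ) (w κ A : ℕ → ℝ) (lam : ℝ) : ℝ :=
  2 * (2 : ℝ) ^ ((1 - κ 0) / 2) / (Real.sqrt Real.pi * Real.Gamma (κ 0 / 2)) / 2 * A 0 *
      besselK ((κ 0 - 1) / 2) |lam| * |lam| ^ ((κ 0 - 1) / 2) +
    ∑ j ∈ Finset.Icc 1 n,
      (2 : ℝ) ^ ((1 - κ j) / 2) / (Real.sqrt Real.pi * Real.Gamma (κ j / 2)) / 2 * A j *
        (besselK ((κ j - 1) / 2) |lam + w j| * |lam + w j| ^ ((κ j - 1) / 2) +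
          besselK ((κ j - 1) / 2) |lam - w j| * |lam - w j| ^ ((κ j - 1) / 2))

/-! ### Auxiliary definitions and lemmas -/

noncomputable def Hfun (κ lam : ℝ) : ℝ :=
  ∫ t in Set.Ioi (0:ℝ), t ^ ((κ-3)/2) * Real.exp (-(t + lam^2/(4*t)))

noncomputable def Gf (κ lam : ℝ) : ℝ :=
  besselK ((κ - 1) / 2) |lam| * |lam| ^ ((κ - 1) / 2)

lemma besselK_sub (ν z : ℝ) (hz : 0 < z) :
    besselK ν z * z ^ ν =
      2 ^ (ν - 1) * ∫ t in Set.Ioi (0 : ℝ), t ^ (ν - 1) * Real.exp (-(t + z ^ 2 / (4 * t))) := by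
  have hb : (0:ℝ) < 2 / z := by positivity
  have key := integral_comp_mul_left_Ioi
    (fun s => s ^ (ν - 1) * Real.exp (-(z / 2) * (s + 1 / s))) 0 hb
  rw [mul_zero] at key
  simp only [smul_eq_mul] at key
  have h2 : ∫ t in Set.Ioi (0:ℝ),
      (2 / z * t) ^ (ν - 1) * Real.exp (-(z / 2) * (2 / z * t + 1 / (2 / z * t)))
      = (2 / z) ^ (ν - 1) * ∫ t in Set.Ioi (0:ℝ), t ^ (ν - 1) * Real.exp (-(t + z ^ 2 / (4 * t))) := by
    rw [← integral_const_mul]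
    refine setIntegral_congr_fun measurableSet_Ioi (fun t ht => ?_)
    have ht' : (0:ℝ) < t := ht
    rw [Real.mul_rpow hb.le ht'.le]
    ring_nf
    congr 2
    field_simp
    ring
  rw [h2] at key
  have hI : (∫ s in Set.Ioi (0:ℝ), s ^ (ν - 1) * Real.exp (-(z / 2) * (s + 1 / s)))
      = (2 / z) * ((2 / z) ^ (ν - 1) *
        ∫ t in Set.Ioi (0:ℝ), t ^ (ν - 1) * Real.exp (-(t + z ^ 2 / (4 * t)))) := by
    rw [key, ← mul_assoc, mul_inv_cancel₀ hb.ne', one_mul]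
  rw [besselK, hI]
  have hzν : (2 / z) * (2 / z) ^ (ν - 1) = (2 / z) ^ ν := by
    have h := Real.rpow_add hb 1 (ν - 1)
    rw [Real.rpow_one] at h
    rw [← h]; ring_nf
  have hmul : (2 / z : ℝ) ^ ν * z ^ ν = 2 ^ ν := by
    rw [← Real.mul_rpow (by positivity) hz.le, div_mul_cancel₀ _ hz.ne']
  have h2ν : (2:ℝ) ^ ν = 2 * 2 ^ (ν - 1) := by
    have h := Real.rpow_add (show (0:ℝ) < 2 by norm_num) 1 (ν - 1)
    rw [Real.rpow_one] at h
    rw [← h]; ring_nf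
  set J := ∫ t in Set.Ioi (0:ℝ), t ^ (ν - 1) * Real.exp (-(t + z ^ 2 / (4 * t)))
  calc (1/2 : ℝ) * ((2/z) * ((2/z)^(ν-1) * J)) * z^ν
      = (1/2) * ((2/z) * (2/z)^(ν-1) * z^ν) * J := by ring
    _ = (1/2) * ((2/z)^ν * z^ν) * J := by rw [hzν]
    _ = (1/2) * (2^ν) * J := by rw [hmul]
    _ = 2^(ν-1) * J := by rw [h2ν]; ring

lemma norm_cexp_I_mul (a x : ℝ) : ‖Complex.exp (Complex.I * a * x)‖ = 1 := by
  rw [Complex.norm_exp]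
  norm_num [Complex.mul_re, Complex.I_re, Complex.I_im, Complex.ofReal_re, Complex.ofReal_im]

lemma slice_eq (x q t : ℝ) (lam : ℝ) :
    Complex.exp (Complex.I * lam * x) * ((t ^ q * Real.exp (-(t + lam^2/(4*t))) : ℝ) : ℂ)
      = ((t ^ q * Real.exp (-t) : ℝ) : ℂ) *
        (Complex.exp (Complex.I * lam * x) * ((Real.exp (-(1/(4*t)) * lam^2) : ℝ) : ℂ)) := by
  have h : Real.exp (-(t + lam^2/(4*t))) = Real.exp (-t) * Real.exp (-(1/(4*t)) * lam^2) := by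
    rw [← Real.exp_add]; congr 1; ring
  rw [h]; push_cast; ring

lemma sliceIntegrable (x q : ℝ) {t : ℝ} (ht : 0 < t) :
    Integrable (fun lam : ℝ => Complex.exp (Complex.I * lam * x) *
      ((t ^ q * Real.exp (-(t + lam^2/(4*t))) : ℝ) : ℂ)) := by
  have hmain : Integrable (fun lam : ℝ => Real.exp (-(1/(4*t)) * lam^2)) :=
    integrable_exp_neg_mul_sq (by positivity)
  have h2 : Integrable (fun lam : ℝ => Complex.exp (Complex.I * lam * x) *
      ((Real.exp (-(1/(4*t)) * lam^2) : ℝ) : ℂ)) := by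
    refine hmain.ofReal.bdd_mul (c := 1) ?_ (Filter.Eventually.of_forall fun lam => le_of_eq (norm_cexp_I_mul lam x))
    exact (Complex.continuous_exp.comp (by continuity)).aestronglyMeasurable
  have := h2.const_mul ((t ^ q * Real.exp (-t) : ℝ) : ℂ)
  exact this.congr (Filter.Eventually.of_forall fun lam => (slice_eq x q t lam).symm)

lemma norm_slice (x q : ℝ) {t : ℝ} (ht : 0 < t) (lam : ℝ) :
    ‖Complex.exp (Complex.I * lam * x) * ((t ^ q * Real.exp (-(t + lam^2/(4*t))) : ℝ) : ℂ)‖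
      = t ^ q * Real.exp (-t) * Real.exp (-(1/(4*t)) * lam^2) := by
  rw [norm_mul, norm_cexp_I_mul, one_mul, Complex.norm_real, Real.norm_eq_abs,
    abs_of_nonneg (by positivity),
    show Real.exp (-(t + lam^2/(4*t))) = Real.exp (-t) * Real.exp (-(1/(4*t)) * lam^2) by
      rw [← Real.exp_add]; congr 1; ring]
  ring

lemma norm_slice_integral (x q : ℝ) {t : ℝ} (ht : 0 < t) :
    ∫ lam : ℝ, ‖Complex.exp (Complex.I * lam * x) *
        ((t ^ q * Real.exp (-(t + lam^2/(4*t))) : ℝ) : ℂ)‖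
      = t ^ q * Real.exp (-t) * Real.sqrt (π / (1/(4*t))) := by
  rw [show (fun lam : ℝ => ‖Complex.exp (Complex.I * lam * x) *
        ((t ^ q * Real.exp (-(t + lam^2/(4*t))) : ℝ) : ℂ)‖)
      = fun lam => t ^ q * Real.exp (-t) * Real.exp (-(1/(4*t)) * lam^2) from
    funext fun lam => norm_slice x q ht lam]
  rw [integral_const_mul, integral_gaussian]

lemma prodIntegrable {κ : ℝ} (hκ : 0 < κ) (x : ℝ) :
    Integrable (fun p : ℝ × ℝ => Complex.exp (Complex.I * p.1 * x) *
      ((p.2 ^ ((κ-3)/2) * Real.exp (-(p.2 + p.1^2/(4*p.2))) : ℝ) : ℂ))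
      (volume.prod (volume.restrict (Set.Ioi 0))) := by
  have hmeas : AEStronglyMeasurable (fun p : ℝ × ℝ => Complex.exp (Complex.I * p.1 * x) *
      ((p.2 ^ ((κ-3)/2) * Real.exp (-(p.2 + p.1^2/(4*p.2))) : ℝ) : ℂ))
      (volume.prod (volume.restrict (Set.Ioi 0))) := by
    apply AEStronglyMeasurable.mul
    · exact (Complex.continuous_exp.comp (by continuity)).aestronglyMeasurable
    · refine (Complex.continuous_ofReal.measurable.comp ?_).aestronglyMeasurable
      have : Measurable fun p : ℝ × ℝ =>
          p.2 ^ ((κ-3)/2) * Real.exp (-(p.2 + p.1^2/(4*p.2))) := by fun_prop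
      exact this
  rw [integrable_prod_iff' hmeas]
  constructor
  · exact (ae_restrict_iff' measurableSet_Ioi).2
      (Filter.Eventually.of_forall fun t ht => sliceIntegrable x _ ht)
  · have hGamma : IntegrableOn (fun t : ℝ => Real.exp (-t) * t ^ (κ/2 - 1)) (Set.Ioi 0) :=
      Real.GammaIntegral_convergent (by positivity)
    refine (hGamma.const_mul (Real.sqrt (π*4))).congr ?_
    refine (ae_restrict_iff' measurableSet_Ioi).2 (Filter.Eventually.of_forall fun t ht => ?_)
    have ht' : (0:ℝ) < t := ht
    show Real.sqrt (π*4) * (Real.exp (-t) * t ^ (κ/2-1))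
      = ∫ lam : ℝ, ‖Complex.exp (Complex.I * lam * x) *
          ((t ^ ((κ-3)/2) * Real.exp (-(t + lam^2/(4*t))) : ℝ) : ℂ)‖
    rw [norm_slice_integral x _ ht',
      show π / (1/(4*t)) = (π*4)*t by field_simp,
      Real.sqrt_mul (by positivity) t, Real.sqrt_eq_rpow t,
      show t ^ (κ/2 - 1) = t ^ ((κ-3)/2) * t ^ ((1:ℝ)/2) by
        rw [← Real.rpow_add ht']; congr 1; ring]
    ring

lemma inner_gauss (x q : ℝ) {t : ℝ} (ht : 0 < t) :
    ∫ lam : ℝ, Complex.exp (Complex.I * lam * x) *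
        ((t ^ q * Real.exp (-(t + lam^2/(4*t))) : ℝ) : ℂ)
      = ((t ^ q * Real.exp (-t) * (Real.sqrt (π * (4*t)) * Real.exp (-(x^2*t))) : ℝ) : ℂ) := by
  have hb : (0:ℝ) < 1/(4*t) := by positivity
  have fg := fourierIntegral_gaussian (b := ((1/(4*t):ℝ) : ℂ)) (by simpa using hb) (x : ℂ)
  calc ∫ lam : ℝ, Complex.exp (Complex.I * lam * x) *
        ((t ^ q * Real.exp (-(t + lam^2/(4*t))) : ℝ) : ℂ)
      = ∫ lam : ℝ, ((t ^ q * Real.exp (-t) : ℝ) : ℂ) *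
          (Complex.exp (Complex.I * x * lam) * Complex.exp (-((1/(4*t):ℝ):ℂ) * lam^2)) := by
        congr 1; funext lam
        have h : Real.exp (-(t + lam^2/(4*t))) = Real.exp (-t) * Real.exp (-(1/(4*t)) * lam^2) := by
          rw [← Real.exp_add]; congr 1; ring
        rw [h, show Complex.I * (lam:ℂ) * (x:ℂ) = Complex.I * x * lam by ring]
        push_cast
        ring
    _ = ((t ^ q * Real.exp (-t) : ℝ) : ℂ) *
          ((↑π / ((1/(4*t):ℝ):ℂ)) ^ (1/2 : ℂ) * Complex.exp (-(x:ℂ)^2 / (4 * ((1/(4*t):ℝ):ℂ)))) := by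
        rw [integral_const_mul, fg]
    _ = ((t ^ q * Real.exp (-t) * (Real.sqrt (π * (4*t)) * Real.exp (-(x^2*t))) : ℝ) : ℂ) := by
        have h1 : (↑π / ((1/(4*t):ℝ):ℂ)) = ((π * (4*t) : ℝ) : ℂ) := by
          push_cast; field_simp
        have h2 : (-(x:ℂ)^2 / (4 * ((1/(4*t):ℝ):ℂ))) = ((-(x^2*t) : ℝ) : ℂ) := by
          push_cast; field_simp
        rw [h1, h2, show ((1/2 : ℂ)) = ((1/2 : ℝ) : ℂ) by norm_num,
          ← Complex.ofReal_cpow (by positivity), ← Complex.ofReal_exp, Real.sqrt_eq_rpow]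
        push_cast
        ring

lemma real_outer {κ : ℝ} (hκ : 0 < κ) (x : ℝ) :
    ∫ t in Set.Ioi (0:ℝ), t ^ ((κ-3)/2) * Real.exp (-t) * (Real.sqrt (π * (4*t)) * Real.exp (-(x^2*t)))
      = Real.sqrt (π * 4) * ((1/(1+x^2)) ^ (κ/2) * Real.Gamma (κ/2)) := by
  have h1 : ∫ t in Set.Ioi (0:ℝ), t ^ ((κ-3)/2) * Real.exp (-t) * (Real.sqrt (π * (4*t)) * Real.exp (-(x^2*t)))
      = ∫ t in Set.Ioi (0:ℝ), Real.sqrt (π * 4) * (t ^ (κ/2 - 1) * Real.exp (-((1+x^2)*t))) := by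
    refine setIntegral_congr_fun measurableSet_Ioi (fun t ht => ?_)
    have ht' : (0:ℝ) < t := ht
    rw [show π * (4*t) = (π*4)*t by ring, Real.sqrt_mul (by positivity), Real.sqrt_eq_rpow t,
      show Real.exp (-((1+x^2)*t)) = Real.exp (-t) * Real.exp (-(x^2*t)) by
        rw [← Real.exp_add]; ring_nf,
      show t ^ (κ/2 - 1) = t ^ ((κ-3)/2) * t ^ ((1:ℝ)/2) by
        rw [← Real.rpow_add ht']; congr 1; ring]
    ring
  rw [h1, integral_const_mul, integral_rpow_mul_exp_neg_mul_Ioi (by positivity) (by positivity)]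

lemma Hfun_pt {κ : ℝ} (x lam : ℝ) :
    Complex.exp (Complex.I*lam*x) * ((Hfun κ lam : ℝ):ℂ)
    = ∫ t in Set.Ioi (0:ℝ), Complex.exp (Complex.I*lam*x) *
        ((t^((κ-3)/2) * Real.exp (-(t+lam^2/(4*t))) : ℝ):ℂ) := by
  rw [integral_const_mul, Hfun]
  congr 1
  exact integral_ofReal.symm

lemma Hfun_integrable {κ : ℝ} (hκ : 0 < κ) (x : ℝ) :
    Integrable (fun lam : ℝ => Complex.exp (Complex.I * lam * x) * ((Hfun κ lam : ℝ) : ℂ)) := by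
  have h := (prodIntegrable hκ x).integral_prod_left
  exact h.congr (Filter.Eventually.of_forall fun lam => (Hfun_pt x lam).symm)

lemma Hfun_integral {κ : ℝ} (hκ : 0 < κ) (x : ℝ) :
    ∫ lam : ℝ, Complex.exp (Complex.I * lam * x) * ((Hfun κ lam : ℝ) : ℂ)
      = ((Real.sqrt (π*4) * ((1/(1+x^2)) ^ (κ/2) * Real.Gamma (κ/2)) : ℝ) : ℂ) := by
  have hswap := integral_integral_swap (f := fun (lam t : ℝ) => Complex.exp (Complex.I*lam*x) *
      ((t^((κ-3)/2) * Real.exp (-(t+lam^2/(4*t))) : ℝ):ℂ))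
    (μ := volume) (ν := volume.restrict (Set.Ioi 0)) (prodIntegrable hκ x)
  calc ∫ lam : ℝ, Complex.exp (Complex.I * lam * x) * ((Hfun κ lam : ℝ) : ℂ)
      = ∫ lam : ℝ, ∫ t in Set.Ioi (0:ℝ), Complex.exp (Complex.I*lam*x) *
          ((t^((κ-3)/2) * Real.exp (-(t+lam^2/(4*t))) : ℝ):ℂ) := by
        exact integral_congr_ae (Filter.Eventually.of_forall fun lam => Hfun_pt x lam)
    _ = ∫ t in Set.Ioi (0:ℝ), ∫ lam : ℝ, Complex.exp (Complex.I*lam*x) *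
          ((t^((κ-3)/2) * Real.exp (-(t+lam^2/(4*t))) : ℝ):ℂ) := hswap
    _ = ∫ t in Set.Ioi (0:ℝ), ((t ^ ((κ-3)/2) * Real.exp (-t) *
          (Real.sqrt (π * (4*t)) * Real.exp (-(x^2*t))) : ℝ) : ℂ) := by
        refine setIntegral_congr_fun measurableSet_Ioi (fun t ht => ?_)
        exact inner_gauss x _ ht
    _ = ((∫ t in Set.Ioi (0:ℝ), t ^ ((κ-3)/2) * Real.exp (-t) *
          (Real.sqrt (π * (4*t)) * Real.exp (-(x^2*t))) : ℝ) : ℂ) := integral_ofReal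
    _ = ((Real.sqrt (π*4) * ((1/(1+x^2)) ^ (κ/2) * Real.Gamma (κ/2)) : ℝ) : ℂ) := by
        rw [real_outer hκ x]

lemma Gf_eq {κ : ℝ} (lam : ℝ) (hlam : lam ≠ 0) :
    Gf κ lam = 2 ^ ((κ-3)/2) * Hfun κ lam := by
  have habs : (0:ℝ) < |lam| := abs_pos.2 hlam
  have h := besselK_sub ((κ-1)/2) |lam| habs
  rw [show (κ-1)/2 - 1 = (κ-3)/2 by ring, sq_abs] at h
  rw [Gf, h, Hfun]

lemma ae_ne_zero : ∀ᵐ lam : ℝ, lam ≠ 0 := by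
  have h : (volume : Measure ℝ) {(0:ℝ)} = 0 := measure_singleton 0
  filter_upwards [compl_mem_ae_iff.2 h] with lam hlam
  simpa using hlam

lemma Gf_cexp_ae {κ : ℝ} (x : ℝ) :
    (fun lam : ℝ => Complex.exp (Complex.I * lam * x) * ((Gf κ lam : ℝ) : ℂ))
      =ᵐ[volume] fun lam : ℝ => (((2:ℝ) ^ ((κ-3)/2) : ℝ) : ℂ) *
        (Complex.exp (Complex.I * lam * x) * ((Hfun κ lam : ℝ) : ℂ)) := by
  filter_upwards [ae_ne_zero] with lam hlam
  rw [Gf_eq lam hlam]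
  push_cast
  ring

lemma Gf_integrable {κ : ℝ} (hκ : 0 < κ) (x : ℝ) :
    Integrable (fun lam : ℝ => Complex.exp (Complex.I * lam * x) * ((Gf κ lam : ℝ) : ℂ)) := by
  exact (((Hfun_integrable hκ x).const_mul _).congr (Gf_cexp_ae x).symm)

lemma Gf_integral {κ : ℝ} (hκ : 0 < κ) (x : ℝ) :
    ∫ lam : ℝ, Complex.exp (Complex.I * lam * x) * ((Gf κ lam : ℝ) : ℂ)
      = (((2:ℝ) ^ ((κ-3)/2) * (Real.sqrt (π*4) * ((1/(1+x^2)) ^ (κ/2) * Real.Gamma (κ/2))) : ℝ) : ℂ) := by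
  rw [integral_congr_ae (Gf_cexp_ae x), integral_const_mul, Hfun_integral hκ x]
  push_cast
  ring

lemma Gf_shift {κ : ℝ} (hκ : 0 < κ) (x μ : ℝ) :
    Integrable (fun lam : ℝ => Complex.exp (Complex.I * lam * x) * ((Gf κ (lam - μ) : ℝ) : ℂ)) ∧
    ∫ lam : ℝ, Complex.exp (Complex.I * lam * x) * ((Gf κ (lam - μ) : ℝ) : ℂ)
      = Complex.exp (Complex.I * μ * x) *
        (((2:ℝ) ^ ((κ-3)/2) * (Real.sqrt (π*4) * ((1/(1+x^2)) ^ (κ/2) * Real.Gamma (κ/2))) : ℝ) : ℂ) := by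
  set F : ℝ → ℂ := fun lam => Complex.exp (Complex.I * lam * x) * ((Gf κ lam : ℝ) : ℂ) with hF
  have hpt : ∀ lam : ℝ, Complex.exp (Complex.I * lam * x) * ((Gf κ (lam - μ) : ℝ) : ℂ)
      = Complex.exp (Complex.I * μ * x) * F (lam - μ) := by
    intro lam
    rw [hF]
    push_cast
    rw [← mul_assoc, ← Complex.exp_add]
    congr 2
    ring
  constructor
  · exact (((Gf_integrable hκ x).comp_sub_right μ).const_mul _).congr
      (Filter.Eventually.of_forall fun lam => (hpt lam).symm)
  · calc ∫ lam : ℝ, Complex.exp (Complex.I * lam * x) * ((Gf κ (lam - μ) : ℝ) : ℂ)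
        = ∫ lam : ℝ, Complex.exp (Complex.I * μ * x) * F (lam - μ) :=
          integral_congr_ae (Filter.Eventually.of_forall hpt)
      _ = Complex.exp (Complex.I * μ * x) * ∫ lam : ℝ, F (lam - μ) := integral_const_mul _ _
      _ = Complex.exp (Complex.I * μ * x) * ∫ lam : ℝ, F lam := by
          rw [integral_sub_right_eq_self F μ]
      _ = _ := by rw [hF, Gf_integral hκ x]

lemma coeff_simp {κ : ℝ} (hκ0 : 0 < κ) (x : ℝ) :
    (2:ℝ) ^ ((1 - κ)/2) / (Real.sqrt π * Real.Gamma (κ/2)) / 2 * 2 *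
      (2 ^ ((κ-3)/2) * (Real.sqrt (π*4) * ((1/(1+x^2)) ^ (κ/2) * Real.Gamma (κ/2))))
    = 1 / (1+x^2) ^ (κ/2) := by
  have hΓ : 0 < Real.Gamma (κ/2) := Real.Gamma_pos_of_pos (by positivity)
  have hπ : 0 < Real.sqrt π := Real.sqrt_pos.2 pi_pos
  have h2 : (2:ℝ)^((1-κ)/2) * 2^((κ-3)/2) = 2⁻¹ := by
    rw [← Real.rpow_add two_pos, show (1-κ)/2 + (κ-3)/2 = -1 by ring, Real.rpow_neg_one]
  have h4 : Real.sqrt (π*4) = 2 * Real.sqrt π := by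
    rw [show π*4 = 2^2*π by ring, Real.sqrt_mul (by positivity), Real.sqrt_sq (by norm_num)]
  have hx2 : ((1:ℝ)/(1+x^2))^(κ/2) = 1/(1+x^2)^(κ/2) := by
    rw [Real.div_rpow zero_le_one (by positivity), Real.one_rpow]
  rw [h4, hx2]
  rw [show (2:ℝ) ^ ((1 - κ)/2) / (Real.sqrt π * Real.Gamma (κ/2)) / 2 * 2 *
      (2 ^ ((κ-3)/2) * (2 * Real.sqrt π * (1/(1+x^2)^(κ/2) * Real.Gamma (κ/2))))
    = (2 ^ ((1-κ)/2) * 2^((κ-3)/2)) * 2 * (Real.sqrt π * Real.Gamma (κ/2)) /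
        (Real.sqrt π * Real.Gamma (κ/2)) * (1/(1+x^2)^(κ/2)) by ring, h2]
  rw [mul_div_assoc, div_self (by positivity), mul_one]
  norm_num

lemma spec_eq (n : ℕ) (w κ A : ℕ → ℝ) (hw0 : w 0 = 0) (lam : ℝ) :
    specDensity n w κ A lam = ∑ j ∈ Finset.range (n+1),
      (2:ℝ) ^ ((1 - κ j)/2) / (Real.sqrt π * Real.Gamma (κ j / 2)) / 2 * A j *
        (Gf (κ j) (lam - (-w j)) + Gf (κ j) (lam - w j)) := by
  rw [show Finset.range (n+1) = insert 0 (Finset.Icc 1 n) by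
      ext j; simp [Nat.lt_succ_iff]; omega,
    Finset.sum_insert (by simp)]
  rw [specDensity]
  congr 1
  · rw [hw0]
    simp only [neg_zero, sub_zero, Gf]
    ring
  · refine Finset.sum_congr rfl fun j _ => ?_
    rw [Gf, Gf, sub_neg_eq_add]

/-- Fourier inversion: `∫_ℝ e^{iλx} f(λ) dλ = ∑_{j=0}^n A_j cos(w_j x)/(1+x²)^{κ_j/2}`,
i.e. `f` is the spectral density of the covariance function
`r(x) = ∑_{j=0}^n A_j cos(w_j x)/(1+x²)^{κ_j/2}`. -/
theorem specDensity_fourier_inversion (n : ℕ) (hn : 1 ≤ n) (w κ A : ℕ → ℝ)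
    (hw0 : w 0 = 0) (hw : ∀ j ∈ Finset.Icc 1 n, 0 < w j)
    (hκ : ∀ j ∈ Finset.range (n + 1), κ j ∈ Set.Ioo (0 : ℝ) 1)
    (hA : ∀ j ∈ Finset.range (n + 1), 0 ≤ A j)
    (hAsum : ∑ j ∈ Finset.range (n + 1), A j = 1) (x : ℝ) :
    ∫ lam : ℝ, Complex.exp (Complex.I * (lam : ℂ) * (x : ℂ)) * (specDensity n w κ A lam : ℂ) =
      ((∑ j ∈ Finset.range (n + 1),
          A j * Real.cos (w j * x) / (1 + x ^ 2) ^ (κ j / 2) : ℝ) : ℂ) := by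
  have hκpos : ∀ j ∈ Finset.range (n+1), 0 < κ j := fun j hj => (hκ j hj).1
  have hpt : ∀ lam : ℝ, Complex.exp (Complex.I * lam * x) * ((specDensity n w κ A lam : ℝ) : ℂ)
      = ∑ j ∈ Finset.range (n+1),
          (((2:ℝ) ^ ((1 - κ j)/2) / (Real.sqrt π * Real.Gamma (κ j / 2)) / 2 * A j : ℝ) : ℂ) *
          (Complex.exp (Complex.I * lam * x) * ((Gf (κ j) (lam - (-w j)) : ℝ) : ℂ)
            + Complex.exp (Complex.I * lam * x) * ((Gf (κ j) (lam - w j) : ℝ) : ℂ)) := by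
    intro lam
    rw [spec_eq n w κ A hw0 lam]
    push_cast
    rw [Finset.mul_sum]
    exact Finset.sum_congr rfl fun j _ => by ring
  rw [integral_congr_ae (Filter.Eventually.of_forall hpt)]
  have hint : ∀ j ∈ Finset.range (n+1), Integrable (fun lam : ℝ =>
      (((2:ℝ) ^ ((1 - κ j)/2) / (Real.sqrt π * Real.Gamma (κ j / 2)) / 2 * A j : ℝ) : ℂ) *
      (Complex.exp (Complex.I * lam * x) * ((Gf (κ j) (lam - (-w j)) : ℝ) : ℂ)
        + Complex.exp (Complex.I * lam * x) * ((Gf (κ j) (lam - w j) : ℝ) : ℂ))) := by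
    intro j hj
    exact (((Gf_shift (hκpos j hj) x (-w j)).1.add (Gf_shift (hκpos j hj) x (w j)).1).const_mul _)
  rw [integral_finset_sum _ hint]
  rw [Complex.ofReal_sum]
  refine Finset.sum_congr rfl fun j hj => ?_
  rw [integral_const_mul,
    integral_add (Gf_shift (hκpos j hj) x (-w j)).1 (Gf_shift (hκpos j hj) x (w j)).1,
    (Gf_shift (hκpos j hj) x (-w j)).2, (Gf_shift (hκpos j hj) x (w j)).2]
  set V : ℝ := (2:ℝ) ^ ((κ j - 3)/2) *
    (Real.sqrt (π*4) * ((1/(1+x^2)) ^ (κ j / 2) * Real.Gamma (κ j / 2))) with hV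
  have hcos : Complex.exp (Complex.I * ((-w j : ℝ) : ℂ) * (x:ℂ))
      + Complex.exp (Complex.I * ((w j : ℝ) : ℂ) * (x:ℂ))
      = ((2 * Real.cos (w j * x) : ℝ) : ℂ) := by
    rw [show Complex.I * ((-w j : ℝ) : ℂ) * (x:ℂ) = -(((w j * x : ℝ):ℂ) * Complex.I) by
        push_cast; ring,
      show Complex.I * ((w j : ℝ) : ℂ) * (x:ℂ) = ((w j * x : ℝ):ℂ) * Complex.I by
        push_cast; ring,
      add_comm, ← neg_mul, ← Complex.two_cos]
    push_cast [Complex.ofReal_cos]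
    ring
  calc (((2:ℝ) ^ ((1 - κ j)/2) / (Real.sqrt π * Real.Gamma (κ j / 2)) / 2 * A j : ℝ) : ℂ) *
        (Complex.exp (Complex.I * ((-w j : ℝ) : ℂ) * (x:ℂ)) * ((V : ℝ) : ℂ)
          + Complex.exp (Complex.I * ((w j : ℝ) : ℂ) * (x:ℂ)) * ((V : ℝ) : ℂ))
      = (Complex.exp (Complex.I * ((-w j : ℝ) : ℂ) * (x:ℂ))
          + Complex.exp (Complex.I * ((w j : ℝ) : ℂ) * (x:ℂ))) *
        ((((2:ℝ) ^ ((1 - κ j)/2) / (Real.sqrt π * Real.Gamma (κ j / 2)) / 2 * A j : ℝ) : ℂ) * ((V : ℝ) : ℂ)) := by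
        ring
    _ = ((2 * Real.cos (w j * x) : ℝ) : ℂ) *
        ((((2:ℝ) ^ ((1 - κ j)/2) / (Real.sqrt π * Real.Gamma (κ j / 2)) / 2 * A j : ℝ) : ℂ) * ((V : ℝ) : ℂ)) := by
        rw [hcos]
    _ = (((2 * Real.cos (w j * x)) *
        ((2:ℝ) ^ ((1 - κ j)/2) / (Real.sqrt π * Real.Gamma (κ j / 2)) / 2 * A j * V) : ℝ) : ℂ) := by
        push_cast; ring
    _ = ((A j * Real.cos (w j * x) / (1 + x ^ 2) ^ (κ j / 2) : ℝ) : ℂ) := by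
        congr 1
        have hc := coeff_simp (hκpos j hj) x
        rw [hV]
        linear_combination (A j * Real.cos (w j * x)) * hc
end

section
/- The spectral density f is nonnegative, integrable on ℝ, and ∫_ℝ f(λ) dλ = 1. -/
/-!
The substitution `s = z / (2u)` turns the defining integral into
`K_ν(z) = (z/2)^ν / 2 · ∫₀^∞ u^(-ν-1) exp(-u - z²/(4u)) du`, so for `λ > 0` the product
`K_ν(λ) λ^ν` is a `u`-integral of `2^(-ν-1) λ^(2ν) u^(-ν-1) exp(-u - λ²/(4u))`. By Tonelli we may
integrate in `λ` first: this is a Gaussian moment, finite because `2ν > -1`, and leaves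
`u^(-1/2) e^(-u)` up to constants, whose integral is `Γ(1/2) = √π`. Hence
`∫_ℝ K_ν(|λ|) |λ|^ν dλ = 2^ν √π Γ(ν + 1/2)`, which for `ν = (κ - 1)/2` is exactly the reciprocal
of the normalising constant `2^((1-κ)/2) / (√π Γ(κ/2))`. Thus every summand of `f` is a probability density (the `j ≥ 1` ones averaged over the
shifts `±w_j`, the `j = 0` one being the same with `w_0 = 0`), and `f` is their convex combination
with weights `A_j`.
-/

open Real Filter Topology MeasureTheory

open Set

theorem integral_comp_div_Ioi {E : Type*} [NormedAddCommGroup E] [NormedSpace ℝ E]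
    (g : ℝ → E) {c : ℝ} (hc : 0 < c) :
    ∫ u in Ioi (0 : ℝ), (c / u ^ 2) • g (c / u) = ∫ s in Ioi (0 : ℝ), g s := by
  have hinv := integral_comp_rpow_Ioi g (p := -1) (by norm_num)
  have hscale := integral_comp_mul_left_Ioi
    (fun x => (|(-1 : ℝ)| * x ^ ((-1 : ℝ) - 1)) • g (x ^ (-1 : ℝ))) 0 (inv_pos.2 hc)
  rw [mul_zero, hinv, inv_inv] at hscale
  calc ∫ u in Ioi (0 : ℝ), (c / u ^ 2) • g (c / u)
      = c⁻¹ • ∫ x in Ioi (0 : ℝ),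
          (|(-1 : ℝ)| * (c⁻¹ * x) ^ ((-1 : ℝ) - 1)) • g ((c⁻¹ * x) ^ (-1 : ℝ)) := by
        rw [← integral_smul]
        refine setIntegral_congr_fun measurableSet_Ioi fun u (hu : 0 < u) => ?_
        rw [smul_smul, rpow_neg_one, show (-1 : ℝ) - 1 = -2 by norm_num,
          rpow_neg (by positivity), rpow_two]
        congr 1
        · field_simp
          norm_num
        · field_simp
    _ = ∫ s in Ioi (0 : ℝ), g s := by rw [hscale, inv_smul_smul₀ hc.ne']

theorem integrable_comp_abs {E : Type*} [NormedAddCommGroup E] {f : ℝ → E}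
    (hf : IntegrableOn f (Ioi 0)) : Integrable fun x => f |x| := by
  have hIoi : IntegrableOn (fun x => f |x|) (Ioi 0) :=
    hf.congr_fun (fun x (hx : 0 < x) => by rw [abs_of_pos hx]) measurableSet_Ioi
  have hIic : IntegrableOn (fun x => f |x|) (Iic 0) := by
    have hneg : MeasurableEmbedding fun x : ℝ => -x := (Homeomorph.neg ℝ).measurableEmbedding
    rw [← Measure.map_neg_eq_self (volume : Measure ℝ), hneg.integrableOn_map_iff]
    simp_rw [Function.comp_def, abs_neg, neg_preimage, neg_Iic, neg_zero]
    exact (integrableOn_Ici_iff_integrableOn_Ioi).2 hIoi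
  rw [← integrableOn_univ, ← Iic_union_Ioi (a := (0 : ℝ))]
  exact hIic.union hIoi

section BesselK

theorem besselK_nonneg (ν z : ℝ) : 0 ≤ besselK ν z :=
  mul_nonneg (by norm_num) <| setIntegral_nonneg measurableSet_Ioi fun s (hs : 0 < s) =>
    mul_nonneg (rpow_nonneg hs.le _) (exp_pos _).le

theorem measurable_besselK (ν : ℝ) : Measurable (besselK ν) := by
  have h : StronglyMeasurable
      fun p : ℝ × ℝ => p.2 ^ (ν - 1) * exp (-(p.1 / 2) * (p.2 + 1 / p.2)) := by
    apply Measurable.stronglyMeasurable; fun_prop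
  exact h.integral_prod_right'.measurable.const_mul _

theorem besselK_eq_integral (ν : ℝ) {z : ℝ} (hz : 0 < z) :
    besselK ν z =
      (z / 2) ^ ν / 2 * ∫ u in Ioi (0 : ℝ), u ^ (-ν - 1) * exp (-(u + z ^ 2 / (4 * u))) := by
  rw [besselK, ← integral_comp_div_Ioi _ (half_pos hz), ← integral_const_mul, ← integral_const_mul]
  refine setIntegral_congr_fun measurableSet_Ioi fun u (hu : 0 < u) => ?_
  have hpow : z / 2 / u ^ 2 * (z / 2 / u) ^ (ν - 1) = (z / 2) ^ ν * u ^ (-ν - 1) := by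
    rw [div_rpow (by positivity) hu.le, rpow_sub_one (by positivity), rpow_sub_one hu.ne',
      show -ν - 1 = -(ν + 1) by ring, rpow_neg hu.le, rpow_add_one hu.ne']
    field_simp
  have hexp : -(z / 2) * (z / 2 / u + 1 / (z / 2 / u)) = -(u + z ^ 2 / (4 * u)) := by
    field_simp; ring
  rw [smul_eq_mul, hexp]
  linear_combination exp (-(u + z ^ 2 / (4 * u))) / 2 * hpow

noncomputable def besselKernel (ν l u : ℝ) : ℝ :=
  2 ^ (-ν - 1) * l ^ (2 * ν) * (u ^ (-ν - 1) * exp (-(u + l ^ 2 / (4 * u))))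

variable {ν : ℝ}

theorem measurable_besselKernel : Measurable (Function.uncurry (besselKernel ν)) := by
  unfold besselKernel Function.uncurry; fun_prop

theorem besselKernel_nonneg {l u : ℝ} (hl : 0 ≤ l) (hu : 0 ≤ u) : 0 ≤ besselKernel ν l u := by
  unfold besselKernel; positivity

theorem besselK_mul_rpow_eq_integral {l : ℝ} (hl : 0 < l) :
    besselK ν l * l ^ ν = ∫ u in Ioi (0 : ℝ), besselKernel ν l u := by
  have hpow : (l / 2) ^ ν / 2 * l ^ ν = 2 ^ (-ν - 1) * l ^ (2 * ν) := by
    rw [div_rpow hl.le zero_le_two, rpow_sub_one two_ne_zero, rpow_neg zero_le_two,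
      two_mul, rpow_add hl]
    field_simp
  simp only [besselKernel, integral_const_mul, besselK_eq_integral ν hl]
  rw [← hpow]
  ring

theorem besselKernel_eq_mul_gaussian_moment {l u : ℝ} (hu : 0 < u) :
    besselKernel ν l u = 2 ^ (-ν - 1) * u ^ (-ν - 1) * exp (-u) *
      (l ^ (2 * ν) * exp (-(4 * u)⁻¹ * l ^ (2 : ℝ))) := by
  rw [besselKernel, rpow_two, neg_add, exp_add]
  field_simp

theorem integrableOn_besselKernel_left (hν : -(1 / 2) < ν) {u : ℝ} (hu : 0 < u) :
    IntegrableOn (fun l => besselKernel ν l u) (Ioi 0) := by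
  have h := integrableOn_rpow_mul_exp_neg_mul_rpow (s := 2 * ν) (p := 2) (b := (4 * u)⁻¹)
    (by linarith) two_pos (by positivity)
  exact IntegrableOn.congr_fun (h.const_mul _)
    (fun _ _ => (besselKernel_eq_mul_gaussian_moment hu).symm) measurableSet_Ioi

theorem integral_besselKernel_left (hν : -(1 / 2) < ν) {u : ℝ} (hu : 0 < u) :
    ∫ l in Ioi (0 : ℝ), besselKernel ν l u
      = 2 ^ (ν - 1) * Gamma (ν + 1 / 2) * (exp (-u) * u ^ ((1 / 2 : ℝ) - 1)) := by
  simp_rw [besselKernel_eq_mul_gaussian_moment hu]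
  rw [integral_const_mul, integral_rpow_mul_exp_neg_mul_rpow two_pos (by linarith) (by positivity),
    show (2 * ν + 1) / 2 = ν + 1 / 2 by ring, show -(2 * ν + 1) / 2 = -(ν + 1 / 2) by ring,
    inv_rpow (by positivity), rpow_neg (by positivity), inv_inv, mul_rpow (by norm_num) hu.le,
    show (4 : ℝ) = 2 ^ (2 : ℝ) by norm_num, ← rpow_mul zero_le_two]
  have h2 : (2 : ℝ) ^ (-ν - 1) * 2 ^ (2 * (ν + 1 / 2)) * (1 / 2) = 2 ^ (ν - 1) := by
    rw [← rpow_add two_pos, show (1 / 2 : ℝ) = 2 ^ (-1 : ℝ) by norm_num, ← rpow_add two_pos]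
    ring_nf
  have hu' : u ^ (-ν - 1) * u ^ (ν + 1 / 2) = u ^ ((1 / 2 : ℝ) - 1) := by
    rw [← rpow_add hu]; ring_nf
  linear_combination (exp (-u) * Gamma (ν + 1 / 2)) *
    (u ^ (-ν - 1) * u ^ (ν + 1 / 2) * h2 + 2 ^ (ν - 1) * hu')

theorem lintegral_lintegral_besselKernel (hν : -(1 / 2) < ν) :
    ∫⁻ l in Ioi (0 : ℝ), ∫⁻ u in Ioi (0 : ℝ), ENNReal.ofReal (besselKernel ν l u)
      = ENNReal.ofReal (2 ^ (ν - 1) * √π * Gamma (ν + 1 / 2)) := by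
  rw [lintegral_lintegral_swap measurable_besselKernel.ennreal_ofReal.aemeasurable]
  have hinner : ∀ u ∈ Ioi (0 : ℝ), ∫⁻ l in Ioi (0 : ℝ), ENNReal.ofReal (besselKernel ν l u)
      = ENNReal.ofReal (2 ^ (ν - 1) * Gamma (ν + 1 / 2) * (exp (-u) * u ^ ((1 / 2 : ℝ) - 1))) := by
    intro u (hu : 0 < u)
    rw [← integral_besselKernel_left hν hu, ofReal_integral_eq_lintegral_ofReal
      (integrableOn_besselKernel_left hν hu)
      (ae_restrict_of_forall_mem measurableSet_Ioi fun l hl => besselKernel_nonneg hl.le hu.le)]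
  have hΓ : 0 ≤ Gamma (ν + 1 / 2) := Gamma_nonneg_of_nonneg (by linarith)
  rw [setLIntegral_congr_fun measurableSet_Ioi hinner, ← ofReal_integral_eq_lintegral_ofReal
    ((GammaIntegral_convergent one_half_pos).const_mul _)
    (ae_restrict_of_forall_mem measurableSet_Ioi fun u (hu : 0 < u) => by positivity),
    integral_const_mul, ← Gamma_eq_integral one_half_pos, Gamma_one_half_eq]
  ring_nf

theorem lintegral_besselK_mul_rpow_Ioi (hν : -(1 / 2) < ν) :
    ∫⁻ l in Ioi (0 : ℝ), ENNReal.ofReal (besselK ν l * l ^ ν)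
      = ENNReal.ofReal (2 ^ (ν - 1) * √π * Gamma (ν + 1 / 2)) := by
  -- The double integral is finite, so for a.e. `l` the inner integrand is integrable and its
  -- Bochner and lower Lebesgue integrals agree.
  have hfin : ∀ᵐ l ∂volume.restrict (Ioi (0 : ℝ)),
      ∫⁻ u in Ioi (0 : ℝ), ENNReal.ofReal (besselKernel ν l u) < ⊤ := by
    refine ae_lt_top (measurable_besselKernel.ennreal_ofReal.lintegral_prod_right) ?_
    rw [lintegral_lintegral_besselKernel hν]
    exact ENNReal.ofReal_ne_top
  rw [← lintegral_lintegral_besselKernel hν]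
  refine lintegral_congr_ae ?_
  filter_upwards [ae_restrict_mem measurableSet_Ioi, hfin] with l (hl : 0 < l) hlt
  have hnonneg : 0 ≤ᵐ[volume.restrict (Ioi 0)] fun u => besselKernel ν l u :=
    ae_restrict_of_forall_mem measurableSet_Ioi fun u hu => besselKernel_nonneg hl.le hu.le
  have hint : IntegrableOn (fun u => besselKernel ν l u) (Ioi 0) :=
    ⟨measurable_besselKernel.of_uncurry_left.aestronglyMeasurable,
      (hasFiniteIntegral_iff_ofReal hnonneg).2 hlt⟩
  rw [besselK_mul_rpow_eq_integral hl, ofReal_integral_eq_lintegral_ofReal hint hnonneg]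

theorem measurable_besselK_mul_rpow : Measurable fun l => besselK ν l * l ^ ν :=
  (measurable_besselK ν).mul (measurable_id.pow_const ν)

theorem integrableOn_besselK_mul_rpow_Ioi (hν : -(1 / 2) < ν) :
    IntegrableOn (fun l => besselK ν l * l ^ ν) (Ioi 0) := by
  refine ⟨measurable_besselK_mul_rpow.aestronglyMeasurable, ?_⟩
  rw [hasFiniteIntegral_iff_ofReal (ae_restrict_of_forall_mem measurableSet_Ioi
    fun l (hl : 0 < l) => mul_nonneg (besselK_nonneg ν l) (rpow_nonneg hl.le ν)),
    lintegral_besselK_mul_rpow_Ioi hν]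
  exact ENNReal.ofReal_lt_top

theorem integral_besselK_mul_rpow_Ioi (hν : -(1 / 2) < ν) :
    ∫ l in Ioi (0 : ℝ), besselK ν l * l ^ ν = 2 ^ (ν - 1) * √π * Gamma (ν + 1 / 2) := by
  have hΓ : 0 ≤ Gamma (ν + 1 / 2) := Gamma_nonneg_of_nonneg (by linarith)
  rw [integral_eq_lintegral_of_nonneg_ae (ae_restrict_of_forall_mem measurableSet_Ioi
    fun l (hl : 0 < l) => mul_nonneg (besselK_nonneg ν l) (rpow_nonneg hl.le ν))
    measurable_besselK_mul_rpow.aestronglyMeasurable, lintegral_besselK_mul_rpow_Ioi hν,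
    ENNReal.toReal_ofReal (by positivity)]

theorem integral_besselK_abs_mul_rpow (hν : -(1 / 2) < ν) :
    ∫ l, besselK ν |l| * |l| ^ ν = 2 ^ ν * √π * Gamma (ν + 1 / 2) := by
  rw [integral_comp_abs (f := fun l => besselK ν l * l ^ ν), integral_besselK_mul_rpow_Ioi hν,
    ← mul_assoc, ← mul_assoc, mul_comm 2, rpow_sub_one two_ne_zero]
  field_simp

end BesselK

noncomputable def besselDensity (κ l : ℝ) : ℝ :=
  2 ^ ((1 - κ) / 2) / (√π * Gamma (κ / 2)) * (besselK ((κ - 1) / 2) |l| * |l| ^ ((κ - 1) / 2))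

section BesselDensity

variable {κ : ℝ}

theorem besselDensity_nonneg (hκ : 0 ≤ κ) (l : ℝ) : 0 ≤ besselDensity κ l := by
  have := Gamma_nonneg_of_nonneg (s := κ / 2) (by positivity)
  have := besselK_nonneg ((κ - 1) / 2) |l|
  unfold besselDensity; positivity

theorem integrable_besselDensity (hκ : 0 < κ) : Integrable (besselDensity κ) :=
  (integrable_comp_abs (integrableOn_besselK_mul_rpow_Ioi (by linarith))).const_mul _

theorem integral_besselDensity (hκ : 0 < κ) : ∫ l, besselDensity κ l = 1 := by
  have hΓ : Gamma (κ / 2) ≠ 0 := (Gamma_pos_of_pos (by positivity)).ne'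
  have h2 : (2 : ℝ) ^ ((1 - κ) / 2) * 2 ^ ((κ - 1) / 2) = 1 := by
    rw [← rpow_add two_pos]; ring_nf; exact rpow_zero 2
  simp only [besselDensity]
  rw [integral_const_mul, integral_besselK_abs_mul_rpow (by linarith),
    show (κ - 1) / 2 + 1 / 2 = κ / 2 by ring]
  field_simp
  linear_combination h2

noncomputable def pairedBesselDensity (κ a l : ℝ) : ℝ :=
  (besselDensity κ (l + a) + besselDensity κ (l - a)) / 2

theorem pairedBesselDensity_nonneg (hκ : 0 ≤ κ) (a l : ℝ) : 0 ≤ pairedBesselDensity κ a l :=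
  div_nonneg (add_nonneg (besselDensity_nonneg hκ _) (besselDensity_nonneg hκ _)) zero_le_two

theorem integrable_pairedBesselDensity (hκ : 0 < κ) (a : ℝ) :
    Integrable (pairedBesselDensity κ a) :=
  (((integrable_besselDensity hκ).comp_add_right a).add
    ((integrable_besselDensity hκ).comp_sub_right a)).div_const 2

theorem integral_pairedBesselDensity (hκ : 0 < κ) (a : ℝ) :
    ∫ l, pairedBesselDensity κ a l = 1 := by
  have h := integrable_besselDensity hκ
  simp only [pairedBesselDensity]
  rw [integral_div, integral_add (h.comp_add_right a) (h.comp_sub_right a),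
    integral_add_right_eq_self (besselDensity κ), integral_sub_right_eq_self (besselDensity κ),
    integral_besselDensity hκ]
  norm_num

end BesselDensity

theorem specDensity_eq_sum (n : ℕ) {w : ℕ → ℝ} (hw0 : w 0 = 0) (κ A : ℕ → ℝ) :
    specDensity n w κ A =
      fun lam => ∑ j ∈ Finset.range (n + 1), A j * pairedBesselDensity (κ j) (w j) lam := by
  ext lam
  rw [Finset.range_eq_Ico, Finset.sum_eq_sum_Ico_succ_bot n.succ_pos, zero_add,
    Nat.succ_eq_add_one, Finset.Ico_add_one_right_eq_Icc]
  simp only [specDensity, pairedBesselDensity, besselDensity, hw0, add_zero, sub_zero]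
  congr 1
  · ring
  · exact Finset.sum_congr rfl fun j _ => by ring

theorem specDensity_nonneg_integrable_integral_one_general (n : ℕ) (w κ A : ℕ → ℝ)
    (hw0 : w 0 = 0)
    (hκ : ∀ j ∈ Finset.range (n + 1), κ j ∈ Set.Ioo (0 : ℝ) 1)
    (hA : ∀ j ∈ Finset.range (n + 1), 0 ≤ A j)
    (hAsum : ∑ j ∈ Finset.range (n + 1), A j = 1) :
    (∀ lam : ℝ, 0 ≤ specDensity n w κ A lam) ∧
      MeasureTheory.Integrable (specDensity n w κ A) ∧
      ∫ lam : ℝ, specDensity n w κ A lam = 1 := by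
  have hint : ∀ j ∈ Finset.range (n + 1),
      Integrable fun lam => A j * pairedBesselDensity (κ j) (w j) lam :=
    fun j hj => (integrable_pairedBesselDensity (hκ j hj).1 _).const_mul _
  rw [specDensity_eq_sum n hw0]
  refine ⟨fun lam => Finset.sum_nonneg fun j hj => ?_, integrable_finsetSum _ hint, ?_⟩
  · exact mul_nonneg (hA j hj) (pairedBesselDensity_nonneg (hκ j hj).1.le _ _)
  · rw [integral_finsetSum _ hint, ← hAsum]
    refine Finset.sum_congr rfl fun j hj => ?_
    rw [integral_const_mul, integral_pairedBesselDensity (hκ j hj).1, mul_one]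

/-- The spectral density `f` is nonnegative, integrable on `ℝ`, and `∫_ℝ f(λ) dλ = 1`. -/
theorem specDensity_nonneg_integrable_integral_one (n : ℕ) (hn : 1 ≤ n) (w κ A : ℕ → ℝ)
    (hw0 : w 0 = 0) (hw : ∀ j ∈ Finset.Icc 1 n, 0 < w j)
    (hκ : ∀ j ∈ Finset.range (n + 1), κ j ∈ Set.Ioo (0 : ℝ) 1)
    (hA : ∀ j ∈ Finset.range (n + 1), 0 ≤ A j)
    (hAsum : ∑ j ∈ Finset.range (n + 1), A j = 1) :
    (∀ lam : ℝ, 0 ≤ specDensity n w κ A lam) ∧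
      MeasureTheory.Integrable (specDensity n w κ A) ∧
      ∫ lam : ℝ, specDensity n w κ A lam = 1 :=
  specDensity_nonneg_integrable_integral_one_general n w κ A hw0 hκ hA hAsum
end
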